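/- arXiv:1105.3521 — 4 statements merged into one kernel-verified Lean document; each statement's English description precedes it below -/
import Mathlib

section
/- Let C be a Hom-finite, Krull–Schmidt, k-linear triangulated category, (X,Y) a cluster tilting torsion pair in C (i.e. a torsion pair with Y = X[1]), and D a subcategory satisfying condition (RF) with D ⊆ X ⊆ (D[-1])⊥. Then the D-mutation (μ⁻¹(X;D), μ⁻¹(Y;D[1])) is again a cluster tilting torsion pair, i.e. μ⁻¹(Y;D[1]) = μ⁻¹(X;D)[1]. -/
open CategoryTheory CategoryTheory.Limits CategoryTheory.Pretriangulated

variable {C : Type*} [Category C] [Preadditive C] [HasZeroObject C]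
  [HasShift C ℤ] [∀ n : ℤ, (shiftFunctor C n).Additive] [Pretriangulated C]

/-- `Hom(𝒳, 𝒴) = 0`. -/
def homZero (𝒳 𝒴 : Set C) : Prop :=
  ∀ ⦃A B : C⦄, A ∈ 𝒳 → B ∈ 𝒴 → ∀ f : A ⟶ B, f = 0

/-- The shift `𝒳[n]` of a subcategory (closed under isomorphisms). -/
def shiftSet (𝒳 : Set C) (n : ℤ) : Set C :=
  {Z | ∃ A ∈ 𝒳, Nonempty ((A⟦n⟧) ≅ Z)}

/-- The class `𝒳 * 𝒴` of extensions. -/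
def extClass (𝒳 𝒴 : Set C) : Set C :=
  {Z | ∃ (A B : C) (f : A ⟶ Z) (g : Z ⟶ B) (h : B ⟶ A⟦(1:ℤ)⟧),
      A ∈ 𝒳 ∧ B ∈ 𝒴 ∧ Triangle.mk f g h ∈ distTriang C}

/-- A torsion pair: `Hom(𝒳,𝒴) = 0` and `C = 𝒳 * 𝒴`. -/
def IsTorsionPair (𝒳 𝒴 : Set C) : Prop :=
  homZero 𝒳 𝒴 ∧ ∀ Z : C, Z ∈ extClass 𝒳 𝒴

/-- A cotorsion pair: `Hom(𝒳,𝒲[1]) = 0` and `C = 𝒳 * 𝒲[1]`. -/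
def IsCotorsionPair (𝒳 𝒲 : Set C) : Prop :=
  IsTorsionPair 𝒳 (shiftSet 𝒲 (1:ℤ))

/-- Full subcategory closed under isomorphisms, finite direct sums and direct summands. -/
structure IsSubcat (𝒳 : Set C) : Prop where
  mem_of_iso : ∀ ⦃A B : C⦄, (A ≅ B) → A ∈ 𝒳 → B ∈ 𝒳
  biprod_mem : ∀ ⦃A B : C⦄, A ∈ 𝒳 → B ∈ 𝒳 → (A ⊞ B) ∈ 𝒳
  mem_of_biprod : ∀ ⦃A B : C⦄, (A ⊞ B) ∈ 𝒳 → A ∈ 𝒳 ∧ B ∈ 𝒳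

/-- `⊥(𝒟[1]) = {M : Hom(M, 𝒟[1]) = 0}`. -/
def leftPerpShift (𝒟 : Set C) : Set C :=
  {M : C | ∀ D ∈ 𝒟, ∀ f : M ⟶ (D⟦(1:ℤ)⟧), f = 0}

/-- `(𝒟[-1])⊥ = {M : Hom(𝒟[-1], M) = 0}`. -/
def shiftRightPerp (𝒟 : Set C) : Set C :=
  {M : C | ∀ D ∈ 𝒟, ∀ f : (D⟦(-1:ℤ)⟧) ⟶ M, f = 0}

/-- `A` admits a left `𝒟`-approximation. -/
def HasLeftApprox (𝒟 : Set C) (A : C) : Prop :=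
  ∃ D ∈ 𝒟, ∃ f : A ⟶ D, ∀ D' ∈ 𝒟, ∀ g : A ⟶ D', ∃ h : D ⟶ D', f ≫ h = g

/-- `A` admits a right `𝒟`-approximation. -/
def HasRightApprox (𝒟 : Set C) (A : C) : Prop :=
  ∃ D ∈ 𝒟, ∃ f : D ⟶ A, ∀ D' ∈ 𝒟, ∀ g : D' ⟶ A, ∃ h : D' ⟶ D, h ≫ f = g

/-- `μ⁻¹(ℳ;𝒟) = (𝒟 * ℳ[1]) ∩ ⊥(𝒟[1])`. -/
def muInv (ℳ 𝒟 : Set C) : Set C :=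
  extClass 𝒟 (shiftSet ℳ (1:ℤ)) ∩ leftPerpShift 𝒟

/-- `μ(𝒩;𝒟) = (𝒩[-1] * 𝒟) ∩ (𝒟[-1])⊥`. -/
def mu (𝒩 𝒟 : Set C) : Set C :=
  extClass (shiftSet 𝒩 (-1:ℤ)) 𝒟 ∩ shiftRightPerp 𝒟

/-- `(ℳ,𝒩)` is a `𝒟`-mutation pair. -/
def IsMutationPair (ℳ 𝒩 𝒟 : Set C) : Prop :=
  ℳ = mu 𝒩 𝒟 ∧ 𝒩 = muInv ℳ 𝒟

/-- Condition (RF): `𝒟` is functorially finite, rigid and `⊥(𝒟[1]) = (𝒟[-1])⊥`. -/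
def RF (𝒟 : Set C) : Prop :=
  (∀ A : C, HasLeftApprox 𝒟 A) ∧ (∀ A : C, HasRightApprox 𝒟 A) ∧
    homZero 𝒟 (shiftSet 𝒟 (1:ℤ)) ∧ leftPerpShift 𝒟 = shiftRightPerp 𝒟

/-- The Ext-injective objects of `𝒳`. -/
def extInj (𝒳 : Set C) : Set C :=
  {T : C | T ∈ 𝒳 ∧ ∀ A ∈ 𝒳, ∀ f : A ⟶ (T⟦(1:ℤ)⟧), f = 0}

/-- The Ext-projective objects of `𝒴`. -/
def extProj (𝒴 : Set C) : Set C :=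
  {T : C | T ∈ 𝒴 ∧ ∀ B ∈ 𝒴, ∀ f : T ⟶ (B⟦(1:ℤ)⟧), f = 0}

/-!
Shifting triangles gives `μ⁻¹(𝒳[1];𝒟[1]) = μ⁻¹(𝒳;𝒟)[1]`, and `Hom(μ⁻¹(𝒳;𝒟), μ⁻¹(𝒴;𝒟[1])) = 0`
follows by chasing maps through the defining triangles, using rigidity of `𝒟` and
`Hom(𝒳, 𝒴) = 0`.

For the decomposition of an object `Z`, the cones of left `𝒟`-approximations of objects of `𝒳`
lie in `μ⁻¹(𝒳;𝒟)`, and `Z` has a right approximation `m : M → Z` by such cones, built from a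
right `𝒟`-approximation of `Z` and the torsion part of its fibre. Since these cones admit no
nonzero maps to `M[1]`, they admit none to the cone `W` of `m`. Hence the cone `V` of a right
`𝒟`-approximation of `W[-1]` satisfies `Hom(𝒳, V) = 0`, so `V ∈ 𝒴 = 𝒳[1]` and
`W[-1] ∈ μ⁻¹(𝒳;𝒟)`.
-/

set_option linter.unusedSectionVars false

section Shift

variable {𝒜 ℬ 𝒜' ℬ' 𝒟 : Set C}

lemma hom_shift_eq_zero {A B : C} (h : ∀ f : A ⟶ B, f = 0) (n : ℤ) (g : A⟦n⟧ ⟶ B⟦n⟧) :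
    g = 0 := by
  obtain ⟨g₀, rfl⟩ := (shiftFunctor C n).map_surjective g
  rw [h g₀, Functor.map_zero]

lemma mem_shiftSet_of_iso {n : ℤ} {A B : C} (e : A ≅ B) (hA : A ∈ shiftSet 𝒜 n) :
    B ∈ shiftSet 𝒜 n := by
  obtain ⟨A₀, hA₀, ⟨e₀⟩⟩ := hA
  exact ⟨A₀, hA₀, ⟨e₀ ≪≫ e⟩⟩

lemma shiftSet_shiftSet_subset (h𝒜 : ∀ ⦃A B : C⦄, (A ≅ B) → A ∈ 𝒜 → B ∈ 𝒜)
    {a b : ℤ} (hab : a + b = 0) : shiftSet (shiftSet 𝒜 a) b ⊆ 𝒜 := by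
  rintro Z ⟨B, ⟨A, hA, ⟨e⟩⟩, ⟨e'⟩⟩
  exact h𝒜 (((shiftFunctorCompIsoId C a b hab).app A).symm ≪≫
    (shiftFunctor C b).mapIso e ≪≫ e') hA

lemma extClass_mono (h𝒜 : 𝒜 ⊆ 𝒜') (hℬ : ℬ ⊆ ℬ') : extClass 𝒜 ℬ ⊆ extClass 𝒜' ℬ' := by
  rintro Z ⟨A, B, f, g, h, hA, hB, hT⟩
  exact ⟨A, B, f, g, h, h𝒜 hA, hℬ hB, hT⟩

lemma mem_extClass_of_iso {Z Z' : C} (e : Z ≅ Z') (hZ : Z ∈ extClass 𝒜 ℬ) :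
    Z' ∈ extClass 𝒜 ℬ := by
  obtain ⟨A, B, f, g, h, hA, hB, hT⟩ := hZ
  refine ⟨A, B, f ≫ e.hom, e.inv ≫ g, h, hA, hB, isomorphic_distinguished _ hT _ ?_⟩
  exact Triangle.isoMk _ _ (Iso.refl _) e.symm (Iso.refl _)
    (by simp [Triangle.mk]) (by simp [Triangle.mk]) (by simp [Triangle.mk])

lemma shift_mem_extClass {Z : C} (hZ : Z ∈ extClass 𝒜 ℬ) (n : ℤ) :
    Z⟦n⟧ ∈ extClass (shiftSet 𝒜 n) (shiftSet ℬ n) := by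
  obtain ⟨A, B, f, g, h, hA, hB, hT⟩ := hZ
  exact ⟨A⟦n⟧, B⟦n⟧, _, _, _, ⟨A, hA, ⟨Iso.refl _⟩⟩, ⟨B, hB, ⟨Iso.refl _⟩⟩,
    Triangle.shift_distinguished _ hT n⟩

lemma mem_leftPerpShift_of_iso {M M' : C} (e : M ≅ M') (hM : M ∈ leftPerpShift 𝒟) :
    M' ∈ leftPerpShift 𝒟 := fun D hD f =>
  (cancel_epi e.hom).mp (by rw [hM D hD (e.hom ≫ f), comp_zero])

lemma shift_mem_leftPerpShift_shiftSet {M : C} (hM : M ∈ leftPerpShift 𝒟) :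
    M⟦(1:ℤ)⟧ ∈ leftPerpShift (shiftSet 𝒟 1) := by
  rintro B ⟨D, hD, ⟨e⟩⟩ f
  have : f ≫ e.inv⟦(1:ℤ)⟧' = 0 := hom_shift_eq_zero (hM D hD) 1 _
  simpa using this =≫ e.hom⟦(1:ℤ)⟧'

lemma shift_neg_one_mem_leftPerpShift {Z : C} (hZ : Z ∈ leftPerpShift (shiftSet 𝒟 1)) :
    Z⟦(-1:ℤ)⟧ ∈ leftPerpShift 𝒟 := by
  intro D hD f
  have : (shiftFunctorCompIsoId C (-1:ℤ) 1 (by omega)).inv.app Z ≫ f⟦(1:ℤ)⟧' = 0 :=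
    hZ _ ⟨D, hD, ⟨Iso.refl _⟩⟩ _
  rwa [Preadditive.IsIso.comp_left_eq_zero, Functor.map_eq_zero_iff] at this

lemma muInv_shiftSet_eq (h𝒟 : ∀ ⦃A B : C⦄, (A ≅ B) → A ∈ 𝒟 → B ∈ 𝒟) :
    muInv (shiftSet 𝒜 1) (shiftSet 𝒟 1) = shiftSet (muInv 𝒜 𝒟) 1 := by
  ext Z
  constructor
  · rintro ⟨hZ, hZ𝒟⟩
    refine ⟨Z⟦(-1:ℤ)⟧, ⟨?_, shift_neg_one_mem_leftPerpShift hZ𝒟⟩,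
      ⟨(shiftFunctorCompIsoId C (-1:ℤ) 1 (by omega)).app Z⟩⟩
    exact extClass_mono (shiftSet_shiftSet_subset h𝒟 (by omega))
      (shiftSet_shiftSet_subset (fun _ _ => mem_shiftSet_of_iso) (by omega))
      (shift_mem_extClass hZ (-1))
  · rintro ⟨M, ⟨hM, hM𝒟⟩, ⟨e⟩⟩
    exact ⟨mem_extClass_of_iso e (shift_mem_extClass hM 1),
      mem_leftPerpShift_of_iso e (shift_mem_leftPerpShift_shiftSet hM𝒟)⟩

end Shift

section Rigidity

variable {𝒳 𝒴 𝒟 : Set C}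

lemma hom_eq_zero_of_mem_leftPerpShift_shiftSet (hperp : leftPerpShift 𝒟 = shiftRightPerp 𝒟)
    {D W : C} (hD : D ∈ 𝒟) (hW : W ∈ leftPerpShift (shiftSet 𝒟 1)) (φ : D ⟶ W) : φ = 0 := by
  have hW' : W⟦(-1:ℤ)⟧ ∈ shiftRightPerp 𝒟 := hperp ▸ shift_neg_one_mem_leftPerpShift hW
  exact (Functor.map_eq_zero_iff _).mp (hW' D hD _)

lemma homZero_muInv (hXY : homZero 𝒳 𝒴) (hperp : leftPerpShift 𝒟 = shiftRightPerp 𝒟) :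
    homZero (muInv 𝒳 𝒟) (muInv 𝒴 (shiftSet 𝒟 1)) := by
  rintro M W ⟨⟨D₁, B₁, f₁, g₁, h₁, hD₁, ⟨X₁, hX₁, ⟨e₁⟩⟩, hT₁⟩, hM⟩
    ⟨⟨A₂, B₂, f₂, g₂, h₂, ⟨D₂, hD₂, ⟨e₂⟩⟩, ⟨Y₂, hY₂, ⟨e₂'⟩⟩, hT₂⟩, hW⟩ φ
  obtain ⟨u, rfl⟩ : ∃ u : B₁ ⟶ W, φ = g₁ ≫ u := Triangle.yoneda_exact₂ _ hT₁ φ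
    (hom_eq_zero_of_mem_leftPerpShift_shiftSet hperp hD₁ hW _)
  have hug : (e₁.hom ≫ u ≫ g₂) ≫ e₂'.inv = 0 := hom_shift_eq_zero (hXY hX₁ hY₂) 1 _
  rw [Preadditive.IsIso.comp_right_eq_zero, Preadditive.IsIso.comp_left_eq_zero] at hug
  obtain ⟨w, rfl⟩ : ∃ w : B₁ ⟶ A₂, u = w ≫ f₂ := Triangle.coyoneda_exact₂ _ hT₂ u hug
  have hgw : g₁ ≫ w ≫ e₂.inv = 0 := hM D₂ hD₂ _
  simpa using hgw =≫ e₂.hom ≫ f₂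

end Rigidity

section Approximation

open ZeroObject

variable {𝒳 𝒴 𝒟 : Set C}

/-- The source of `m` need not lie in `𝒩`. -/
def IsRightApprox (𝒩 : Set C) {M Z : C} (m : M ⟶ Z) : Prop :=
  ∀ Q ∈ 𝒩, ∀ g : Q ⟶ Z, ∃ h : Q ⟶ M, h ≫ m = g

def IsLeftApprox (𝒩 : Set C) {X N : C} (a : X ⟶ N) : Prop :=
  ∀ N' ∈ 𝒩, ∀ g : X ⟶ N', ∃ h : N ⟶ N', a ≫ h = g

/-- In fact these are exactly the objects of `μ⁻¹(𝒳;𝒟)`. -/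
def approxCones (𝒳 𝒟 : Set C) : Set C :=
  {Q | ∃ (X D : C) (a : X ⟶ D) (b : D ⟶ Q) (c : Q ⟶ X⟦(1:ℤ)⟧),
    X ∈ 𝒳 ∧ D ∈ 𝒟 ∧ IsLeftApprox 𝒟 a ∧ Triangle.mk a b c ∈ distTriang C}

lemma IsSubcat.zero_mem (hX : IsSubcat 𝒳) {A : C} (hA : A ∈ 𝒳) : (0 : C) ∈ 𝒳 :=
  (hX.mem_of_biprod (hX.mem_of_iso (isoBiprodZero (isZero_zero C)) hA)).2

lemma subset_approxCones (hX : IsSubcat 𝒳) (hDX : 𝒟 ⊆ 𝒳) : 𝒟 ⊆ approxCones 𝒳 𝒟 :=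
  fun D hD => ⟨0, D, 0, 𝟙 D, 0, hX.zero_mem (hDX hD), hD,
    fun _ _ _ => ⟨0, (isZero_zero C).eq_of_src _ _⟩, contractible_distinguished₁ D⟩

lemma approxCones_subset_muInv (hrig : homZero 𝒟 (shiftSet 𝒟 1)) :
    approxCones 𝒳 𝒟 ⊆ muInv 𝒳 𝒟 := by
  rintro Q ⟨X, D, a, b, c, hX, hD, ha, hT⟩
  refine ⟨⟨D, X⟦(1:ℤ)⟧, b, c, _, hD, ⟨X, hX, ⟨Iso.refl _⟩⟩, rot_of_distTriang _ hT⟩, ?_⟩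
  intro D' hD' f
  obtain ⟨g, rfl⟩ : ∃ g : X⟦(1:ℤ)⟧ ⟶ D'⟦(1:ℤ)⟧, f = c ≫ g :=
    Triangle.yoneda_exact₂ _ (rot_of_distTriang _ hT) f (hrig hD ⟨D', hD', ⟨Iso.refl _⟩⟩ _)
  obtain ⟨g₀, rfl⟩ := (shiftFunctor C (1:ℤ)).map_surjective g
  obtain ⟨h, rfl⟩ := ha D' hD' g₀
  have hca : c ≫ a⟦(1:ℤ)⟧' = 0 := comp_distTriang_mor_zero₃₁ _ hT
  rw [Functor.map_comp, reassoc_of% hca, zero_comp]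

/-- A map `f : Q → Z` lifts along `m` up to an error `f - v ≫ m` that factors through `ρ`,
hence through `s ≫ b ≫ m`. -/
lemma isRightApprox_approxCones_of_triangle_map {K D_Z Z X_K D M : C}
    {ι : K ⟶ D_Z} {ρ : D_Z ⟶ Z} {σ : Z ⟶ K⟦(1:ℤ)⟧} (hTK : Triangle.mk ι ρ σ ∈ distTriang C)
    (hρ : IsRightApprox 𝒟 ρ) {x : X_K ⟶ K} (hx : IsRightApprox 𝒳 x)
    {a : X_K ⟶ D} {b : D ⟶ M} {c : M ⟶ X_K⟦(1:ℤ)⟧} (hTM : Triangle.mk a b c ∈ distTriang C)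
    (hD : D ∈ 𝒟) {m : M ⟶ Z} (hcm : c ≫ x⟦(1:ℤ)⟧' = m ≫ σ) {s : D_Z ⟶ D}
    (hs : s ≫ b ≫ m = ρ) :
    IsRightApprox (approxCones 𝒳 𝒟) m := by
  rintro Q ⟨X', D', a', b', c', hX', hD', ha', hT'⟩ f
  obtain ⟨t, ht⟩ := hρ D' hD' (b' ≫ f)
  obtain ⟨f₀, -, hf₀⟩ : ∃ f₀ : X' ⟶ K, a' ≫ t = f₀ ≫ ι ∧ c' ≫ f₀⟦(1:ℤ)⟧' = f ≫ σ :=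
    complete_distinguished_triangle_morphism₁ _ _ hT' hTK t f ht.symm
  obtain ⟨u, rfl⟩ := hx X' hX' f₀
  obtain ⟨w, hw⟩ := ha' D hD (u ≫ a)
  obtain ⟨v, -, hv⟩ : ∃ v : Q ⟶ M, b' ≫ v = w ≫ b ∧ c' ≫ u⟦(1:ℤ)⟧' = v ≫ c :=
    complete_distinguished_triangle_morphism _ _ hT' hTM u w hw
  have hσ : (f - v ≫ m) ≫ σ = 0 := by
    rw [Preadditive.sub_comp, Category.assoc, ← hcm, ← reassoc_of% hv, ← Functor.map_comp, hf₀,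
      sub_self]
  obtain ⟨t', ht'⟩ : ∃ t' : Q ⟶ D_Z, f - v ≫ m = t' ≫ ρ := Triangle.coyoneda_exact₃ _ hTK _ hσ
  refine ⟨v + t' ≫ s ≫ b, ?_⟩
  rw [Preadditive.add_comp, Category.assoc, Category.assoc, hs, ← ht', add_sub_cancel]

lemma IsTorsionPair.isRightApprox {X K Y : C} (hpair : IsTorsionPair 𝒳 𝒴) {x : X ⟶ K}
    {y : K ⟶ Y} {γ : Y ⟶ X⟦(1:ℤ)⟧} (hT : Triangle.mk x y γ ∈ distTriang C) (hY : Y ∈ 𝒴) :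
    IsRightApprox 𝒳 x := fun _ hX' f =>
  (Triangle.coyoneda_exact₂ _ hT f (hpair.1 hX' hY _)).imp fun _ h => h.symm

/-- With `ρ : D_Z → Z` a right `𝒟`-approximation, `x : X_K → K` the torsion part of its fibre
`K → D_Z` and `a' : X_K → D'` a left `𝒟`-approximation, the approximating cone is the cone of
`(a', x ≫ ι) : X_K → D' ⊞ D_Z`. -/
lemma hasRightApprox_approxCones (hpair : IsTorsionPair 𝒳 𝒴) (hD : IsSubcat 𝒟)
    (hla : ∀ A : C, HasLeftApprox 𝒟 A) (hra : ∀ A : C, HasRightApprox 𝒟 A) (Z : C) :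
    HasRightApprox (approxCones 𝒳 𝒟) Z := by
  obtain ⟨D_Z, hD_Z, ρ, hρ⟩ := hra Z
  obtain ⟨K, ι, σ, hTK⟩ := distinguished_cocone_triangle₁ ρ
  obtain ⟨X_K, Y_K, x, y, γ, hX_K, hY_K, hTtor⟩ := hpair.2 K
  obtain ⟨D', hD', a', ha'⟩ := hla X_K
  let a : X_K ⟶ D' ⊞ D_Z := biprod.lift a' (x ≫ ι)
  have ha : IsLeftApprox 𝒟 a := fun N hN g => by
    obtain ⟨h, rfl⟩ := ha' N hN g
    exact ⟨biprod.fst ≫ h, biprod.lift_fst_assoc _ _ _⟩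
  have hDD : (D' ⊞ D_Z) ∈ 𝒟 := hD.biprod_mem hD' hD_Z
  obtain ⟨M, b, c, hTM⟩ := distinguished_cocone_triangle a
  obtain ⟨m, hbm, hcm⟩ : ∃ m : M ⟶ Z, b ≫ m = biprod.snd ≫ ρ ∧ c ≫ x⟦(1:ℤ)⟧' = m ≫ σ :=
    complete_distinguished_triangle_morphism _ _ hTM hTK x biprod.snd (biprod.lift_snd _ _)
  exact ⟨M, ⟨X_K, _, a, b, c, hX_K, hDD, ha, hTM⟩, m,
    isRightApprox_approxCones_of_triangle_map hTK hρ (hpair.isRightApprox hTtor hY_K) hTM hDD hcm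
      (by rw [hbm, biprod.inr_snd_assoc])⟩

end Approximation

section Extension

variable {𝒳 𝒴 𝒟 : Set C}

lemma IsTorsionPair.mem_right_of_hom_eq_zero (hpair : IsTorsionPair 𝒳 𝒴) (hY : IsSubcat 𝒴)
    {V : C} (hV : ∀ A ∈ 𝒳, ∀ f : A ⟶ V, f = 0) : V ∈ 𝒴 := by
  obtain ⟨A, B, f, g, h, hA, hB, hT⟩ := hpair.2 V
  have hf : (Triangle.mk f g h).rotate.mor₃ = 0 := by
    change -f⟦(1:ℤ)⟧' = 0
    rw [hV A hA f, Functor.map_zero, neg_zero]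
  obtain ⟨e, -, -⟩ := exists_iso_binaryBiproduct_of_distTriang _ (rot_of_distTriang _ hT) hf
  exact (hY.mem_of_biprod (hY.mem_of_iso e hB)).1

lemma hom_eq_zero_of_isRightApprox {𝒩 : Set C} {M Z W : C} {m : M ⟶ Z} {w : Z ⟶ W}
    {d : W ⟶ M⟦(1:ℤ)⟧} (hT : Triangle.mk m w d ∈ distTriang C) (hm : IsRightApprox 𝒩 m)
    (hM : ∀ Q ∈ 𝒩, ∀ f : Q ⟶ M⟦(1:ℤ)⟧, f = 0) {Q : C} (hQ : Q ∈ 𝒩) (f : Q ⟶ W) : f = 0 := by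
  obtain ⟨ψ, rfl⟩ : ∃ ψ : Q ⟶ Z, f = ψ ≫ w := Triangle.coyoneda_exact₃ _ hT f (hM Q hQ _)
  obtain ⟨ψ', rfl⟩ := hm Q hQ ψ
  have hmw : m ≫ w = 0 := comp_distTriang_mor_zero₁₂ _ hT
  rw [Category.assoc, hmw, comp_zero]

lemma hom_cone_of_isRightApprox_eq_zero {U D V : C} {ρ : D ⟶ U} {q : U ⟶ V}
    {d : V ⟶ D⟦(1:ℤ)⟧} (hT : Triangle.mk ρ q d ∈ distTriang C) (hD : D ∈ 𝒟)
    (hρ : IsRightApprox 𝒟 ρ) (hU : ∀ Q ∈ approxCones 𝒳 𝒟, ∀ g : Q⟦(-1:ℤ)⟧ ⟶ U, g = 0)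
    {X : C} (hX : X ∈ 𝒳) (hX𝒟 : X ∈ leftPerpShift 𝒟) (hla : HasLeftApprox 𝒟 X)
    (f : X ⟶ V) : f = 0 := by
  obtain ⟨f', rfl⟩ : ∃ f' : X ⟶ U, f = f' ≫ q := Triangle.coyoneda_exact₃ _ hT f (hX𝒟 D hD _)
  obtain ⟨D', hD', a, ha⟩ := hla
  obtain ⟨Q, b, c, hTQ⟩ := distinguished_cocone_triangle a
  obtain ⟨h, rfl⟩ : ∃ h : D' ⟶ U, f' = a ≫ h := Triangle.yoneda_exact₂ _
    (inv_rot_of_distTriang _ hTQ) f' (hU Q ⟨X, D', a, b, c, hX, hD', ha, hTQ⟩ _)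
  obtain ⟨t, rfl⟩ := hρ D' hD' h
  have hρq : ρ ≫ q = 0 := comp_distTriang_mor_zero₁₂ _ hT
  rw [Category.assoc, Category.assoc, hρq, comp_zero, comp_zero]

lemma shift_neg_one_mem_muInv (hpair : IsTorsionPair 𝒳 (shiftSet 𝒳 1))
    (hY : IsSubcat (shiftSet 𝒳 1)) (hla : ∀ A : C, HasLeftApprox 𝒟 A)
    (hra : ∀ A : C, HasRightApprox 𝒟 A) (hperp : leftPerpShift 𝒟 = shiftRightPerp 𝒟)
    (hXD : 𝒳 ⊆ shiftRightPerp 𝒟) (hDcones : 𝒟 ⊆ approxCones 𝒳 𝒟) {W : C}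
    (hW : ∀ Q ∈ approxCones 𝒳 𝒟, ∀ f : Q ⟶ W, f = 0) : W⟦(-1:ℤ)⟧ ∈ muInv 𝒳 𝒟 := by
  obtain ⟨D_W, hD_W, ρ, hρ⟩ := hra (W⟦(-1:ℤ)⟧)
  obtain ⟨V, q, d, hT⟩ := distinguished_cocone_triangle ρ
  have hV : V ∈ shiftSet 𝒳 1 := hpair.mem_right_of_hom_eq_zero hY fun X hX =>
    hom_cone_of_isRightApprox_eq_zero hT hD_W hρ (fun Q hQ => hom_shift_eq_zero (hW Q hQ) _) hX
      (hperp ▸ hXD hX) (hla X)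
  refine ⟨⟨D_W, V, ρ, q, d, hD_W, hV, hT⟩, ?_⟩
  rw [hperp]
  exact fun D hD => hom_shift_eq_zero (hW D (hDcones hD)) _

lemma mem_extClass_muInv (hX : IsSubcat 𝒳) (hY : IsSubcat (shiftSet 𝒳 1)) (hD : IsSubcat 𝒟)
    (hpair : IsTorsionPair 𝒳 (shiftSet 𝒳 1)) (hRF : RF 𝒟) (hDX : 𝒟 ⊆ 𝒳)
    (hXD : 𝒳 ⊆ shiftRightPerp 𝒟) (Z : C) :
    Z ∈ extClass (muInv 𝒳 𝒟) (shiftSet (muInv 𝒳 𝒟) 1) := by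
  obtain ⟨hla, hra, hrig, hperp⟩ := hRF
  have hcones : approxCones 𝒳 𝒟 ⊆ muInv 𝒳 𝒟 := approxCones_subset_muInv hrig
  obtain ⟨M, hM, m, hm⟩ := hasRightApprox_approxCones hpair hD hla hra Z
  obtain ⟨W, w, d, hT⟩ := distinguished_cocone_triangle m
  have hM1 : M⟦(1:ℤ)⟧ ∈ muInv (shiftSet 𝒳 1) (shiftSet 𝒟 1) := by
    rw [muInv_shiftSet_eq hD.mem_of_iso]
    exact ⟨M, hcones hM, ⟨Iso.refl _⟩⟩
  have hW : ∀ Q ∈ approxCones 𝒳 𝒟, ∀ f : Q ⟶ W, f = 0 := fun Q hQ =>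
    hom_eq_zero_of_isRightApprox hT hm
      (fun _ hQ' => homZero_muInv hpair.1 hperp (hcones hQ') hM1) hQ
  refine ⟨M, W, m, w, d, hcones hM, ⟨W⟦(-1:ℤ)⟧, ?_, ⟨?_⟩⟩, hT⟩
  · exact shift_neg_one_mem_muInv hpair hY hla hra hperp hXD (subset_approxCones hX hDX) hW
  · exact (shiftFunctorCompIsoId C (-1:ℤ) 1 (by omega)).app W

end Extension

/-- the `𝒟`-mutation of a cluster tilting torsion pair is again a
cluster tilting torsion pair. -/
theorem stmt13 (k : Type*) [Field k] [Linear k C]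
    [∀ A B : C, Module.Finite k (A ⟶ B)] [IsIdempotentComplete C]
    (𝒳 𝒴 𝒟 : Set C) (hX : IsSubcat 𝒳) (hY : IsSubcat 𝒴) (hD : IsSubcat 𝒟)
    (hpair : IsTorsionPair 𝒳 𝒴)
    (hct : 𝒴 = shiftSet 𝒳 (1:ℤ))
    (hRF : RF 𝒟)
    (hDX : 𝒟 ⊆ 𝒳) (hXD : 𝒳 ⊆ shiftRightPerp 𝒟) :
    IsTorsionPair (muInv 𝒳 𝒟) (muInv 𝒴 (shiftSet 𝒟 (1:ℤ))) ∧
    muInv 𝒴 (shiftSet 𝒟 (1:ℤ)) = shiftSet (muInv 𝒳 𝒟) (1:ℤ) := by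
  subst hct
  have hshift := muInv_shiftSet_eq (𝒜 := 𝒳) hD.mem_of_iso
  refine ⟨⟨homZero_muInv hpair.1 hRF.2.2.2, ?_⟩, hshift⟩
  rw [hshift]
  exact mem_extClass_muInv hX hY hD hpair hRF hDX hXD
end

section
/- Let C be a Hom-finite, Krull–Schmidt, k-linear triangulated category, (X,Y) a torsion pair in C with core I, and D a subcategory satisfying condition (RF) with D ⊆ X ⊆ (D[-1])⊥. Let (X',Y') = (μ⁻¹(X;D), μ⁻¹(Y;D[1])) with core I'. If D is a proper subcategory of I (i.e. some object of I does not belong to D), then I' ≠ I and (X',Y') ≠ (X,Y). -/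
open CategoryTheory CategoryTheory.Limits CategoryTheory.Pretriangulated

variable {C : Type*} [Category C] [Preadditive C] [HasZeroObject C]
  [HasShift C ℤ] [∀ n : ℤ, (shiftFunctor C n).Additive] [Pretriangulated C]

/-
Let `Z` lie in both the core `I` and the mutated core `I'`. Then `Z[1]` sits in a triangle
`D[1] → Z[1] → Y[1] → D[2]` with `D ∈ 𝒟` and `Y ∈ 𝒴`, whose middle map vanishes because
`Hom(𝒳, 𝒴) = 0`. The triangle splits, so `Z` is a direct summand of `D` and lies in `𝒟`.
Hence `I ∩ I' ⊆ 𝒟`, and an object of `I` outside `𝒟` lies in `I` but not in `I'`.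
-/

lemma homZero.shiftSet {C : Type*} [Category C] [Preadditive C] [HasShift C ℤ]
    [∀ n : ℤ, (shiftFunctor C n).Additive] {𝒳 𝒴 : Set C} (h : homZero 𝒳 𝒴) (n : ℤ) :
    homZero (shiftSet 𝒳 n) (shiftSet 𝒴 n) := by
  rintro A' B' ⟨A, hA, ⟨eA⟩⟩ ⟨B, hB, ⟨eB⟩⟩ f
  have hpre : (shiftFunctor C n).preimage (eA.hom ≫ f ≫ eB.inv) = 0 := h hA hB _
  have hf : f = eA.inv ≫ (shiftFunctor C n).map
      ((shiftFunctor C n).preimage (eA.hom ≫ f ≫ eB.inv)) ≫ eB.hom := by simp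
  rw [hf, hpre, Functor.map_zero, zero_comp, comp_zero]

lemma mem_shiftSet_of_shift_neg_iso {C : Type*} [Category C] [HasShift C ℤ] {𝒮 : Set C}
    {n : ℤ} {A Z : C} (hZ : Z ∈ 𝒮) (e : A⟦-n⟧ ≅ Z) : A ∈ shiftSet 𝒮 n :=
  ⟨Z, hZ, ⟨(shiftFunctor C n).mapIso e.symm ≪≫ shiftNegShift A n⟩⟩

namespace IsSubcat

lemma mem_of_shift_neg_iso {𝒟 : Set C} (h𝒟 : IsSubcat 𝒟) {n : ℤ} {A Z : C}
    (hA : A ∈ shiftSet 𝒟 n) (e : A⟦-n⟧ ≅ Z) : Z ∈ 𝒟 := by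
  obtain ⟨D, hD, ⟨eD⟩⟩ := hA
  exact h𝒟.mem_of_iso ((shiftShiftNeg D n).symm ≪≫ (shiftFunctor C (-n)).mapIso eD ≪≫ e) hD

lemma shiftSet {𝒟 : Set C} (h𝒟 : IsSubcat 𝒟) (n : ℤ) : IsSubcat (shiftSet 𝒟 n) := by
  have := preservesBinaryBiproducts_of_preservesBinaryProducts (shiftFunctor C n)
  have := preservesBinaryBiproducts_of_preservesBinaryProducts (shiftFunctor C (-n))
  refine ⟨?_, ?_, ?_⟩
  · rintro A B e ⟨D, hD, ⟨eD⟩⟩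
    exact ⟨D, hD, ⟨eD ≪≫ e⟩⟩
  · rintro A B ⟨D, hD, ⟨eD⟩⟩ ⟨E, hE, ⟨eE⟩⟩
    exact ⟨D ⊞ E, h𝒟.biprod_mem hD hE,
      ⟨(shiftFunctor C n).mapBiprod D E ≪≫ biprod.mapIso eD eE⟩⟩
  · rintro A B ⟨D, hD, ⟨eD⟩⟩
    have hsplit : (A⟦-n⟧ ⊞ B⟦-n⟧) ∈ 𝒟 :=
      h𝒟.mem_of_iso ((shiftShiftNeg D n).symm ≪≫ (shiftFunctor C (-n)).mapIso eD ≪≫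
        (shiftFunctor C (-n)).mapBiprod A B) hD
    obtain ⟨hA, hB⟩ := h𝒟.mem_of_biprod hsplit
    exact ⟨⟨_, hA, ⟨shiftNegShift A n⟩⟩, ⟨_, hB, ⟨shiftNegShift B n⟩⟩⟩

lemma mem_of_mem_extClass {𝒟 𝒬 : Set C} (h𝒟 : IsSubcat 𝒟) {A : C}
    (hA : A ∈ extClass 𝒟 𝒬) (hA𝒬 : ∀ B ∈ 𝒬, ∀ g : A ⟶ B, g = 0) : A ∈ 𝒟 := by
  obtain ⟨P, Q, f, g, δ, hP, hQ, hT⟩ := hA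
  obtain ⟨e, -, -⟩ := exists_iso_binaryBiproduct_of_distTriang _ (inv_rot_of_distTriang _ hT)
    (by dsimp [Triangle.invRotate]; rw [hA𝒬 Q hQ g]; exact zero_comp)
  exact (h𝒟.mem_of_biprod (h𝒟.mem_of_iso e hP)).2

end IsSubcat

lemma mem_of_mem_of_mem_shiftSet_muInv {𝒳 𝒴 𝒟 : Set C} (h𝒳𝒴 : homZero 𝒳 𝒴)
    (h𝒟 : IsSubcat 𝒟) {Z : C} (hZ𝒳 : Z ∈ 𝒳)
    (hZ : Z ∈ shiftSet (muInv 𝒴 (shiftSet 𝒟 1)) (-1)) : Z ∈ 𝒟 := by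
  obtain ⟨A, ⟨hA, -⟩, ⟨eA⟩⟩ := hZ
  have hA𝒳 : A ∈ shiftSet 𝒳 1 := mem_shiftSet_of_shift_neg_iso hZ𝒳 eA
  have hA𝒟 : A ∈ shiftSet 𝒟 1 :=
    (h𝒟.shiftSet 1).mem_of_mem_extClass hA fun _ hB g => h𝒳𝒴.shiftSet 1 hA𝒳 hB g
  exact h𝒟.mem_of_shift_neg_iso hA𝒟 eA

/-- if `𝒟` is a proper subcategory of the core `I` of the torsion pair
`(𝒳,𝒴)`, then the mutated core `I'` differs from `I` and `(𝒳',𝒴') ≠ (𝒳,𝒴)`. -/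
theorem stmt15 (k : Type*) [Field k] [Linear k C]
    [∀ A B : C, Module.Finite k (A ⟶ B)] [IsIdempotentComplete C]
    (𝒳 𝒴 𝒟 : Set C) (hX : IsSubcat 𝒳) (hY : IsSubcat 𝒴) (hD : IsSubcat 𝒟)
    (hpair : IsTorsionPair 𝒳 𝒴)
    (hRF : RF 𝒟)
    (hDX : 𝒟 ⊆ 𝒳) (hXD : 𝒳 ⊆ shiftRightPerp 𝒟)
    (hDI : 𝒟 ⊆ 𝒳 ∩ shiftSet 𝒴 (-1:ℤ))
    (hproper : ∃ Z ∈ 𝒳 ∩ shiftSet 𝒴 (-1:ℤ), Z ∉ 𝒟) :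
    muInv 𝒳 𝒟 ∩ shiftSet (muInv 𝒴 (shiftSet 𝒟 (1:ℤ))) (-1:ℤ) ≠
      𝒳 ∩ shiftSet 𝒴 (-1:ℤ) ∧
    ¬(muInv 𝒳 𝒟 = 𝒳 ∧ muInv 𝒴 (shiftSet 𝒟 (1:ℤ)) = 𝒴) := by
  obtain ⟨Z, hZI, hZ𝒟⟩ := hproper
  have hcore : muInv 𝒳 𝒟 ∩ shiftSet (muInv 𝒴 (shiftSet 𝒟 (1:ℤ))) (-1:ℤ) ≠
      𝒳 ∩ shiftSet 𝒴 (-1:ℤ) := fun heq =>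
    hZ𝒟 (mem_of_mem_of_mem_shiftSet_muInv hpair.1 hD hZI.1 (heq ▸ hZI).2)
  exact ⟨hcore, fun ⟨h𝒳, h𝒴⟩ => hcore (by rw [h𝒳, h𝒴])⟩
end

section
/- Let U be a Ptolemy diagram of the regular (n+3)-gon P_{n+3} and D ⊆ I(U). Then the D-mutation μ_D(U) of U is again a Ptolemy diagram of P_{n+3}. -/
namespace PolygonPtolemy

/-- `{a,b}` (with `a < b`) is an edge of the regular `N`-gon with vertices `1,…,N`. -/
def IsEdge (N a b : ℕ) : Prop :=
  1 ≤ a ∧ a < b ∧ b ≤ N ∧ (b = a + 1 ∨ (a = 1 ∧ b = N))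

/-- `{a,b}` (with `a < b`) is a diagonal of the regular `N`-gon with vertices `1,…,N`. -/
def IsDiagonal (N a b : ℕ) : Prop :=
  1 ≤ a ∧ a < b ∧ b ≤ N ∧ b ≠ a + 1 ∧ ¬(a = 1 ∧ b = N)

/-- Two diagonals, given as ordered pairs, cross each other. -/
def Cross (p q : ℕ × ℕ) : Prop :=
  (p.1 < q.1 ∧ q.1 < p.2 ∧ p.2 < q.2) ∨ (q.1 < p.1 ∧ p.1 < q.2 ∧ q.2 < p.2)

/-- `U` is a Ptolemy diagram of the `N`-gon: a set of diagonals such that, whenever two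
diagonals `{a,c}` and `{b,d}` of `U` cross, those of `{a,b}`, `{b,c}`, `{c,d}`, `{a,d}`
which are diagonals belong to `U`. -/
def IsPtolemy (N : ℕ) (U : Set (ℕ × ℕ)) : Prop :=
  (∀ p ∈ U, IsDiagonal N p.1 p.2) ∧
  ∀ a b c d : ℕ, (a, c) ∈ U → (b, d) ∈ U → a < b → b < c → c < d →
    (IsDiagonal N a b → (a, b) ∈ U) ∧ (IsDiagonal N b c → (b, c) ∈ U) ∧
    (IsDiagonal N c d → (c, d) ∈ U) ∧ (IsDiagonal N a d → (a, d) ∈ U)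

/-- `I(U)`: the diagonals of `U` crossing no diagonal of `U`. -/
def core (U : Set (ℕ × ℕ)) : Set (ℕ × ℕ) :=
  {p | p ∈ U ∧ ∀ q ∈ U, ¬ Cross p q}

/-- `{a,b}` (with `a < b`, both in `S`) is a boundary pair of the cell `S`:
either `a` and `b` are consecutive in `S`, or `a = min S` and `b = max S`. -/
def CellBoundaryPair (S : Finset ℕ) (a b : ℕ) : Prop :=
  a ∈ S ∧ b ∈ S ∧ a < b ∧
    ((∀ c ∈ S, ¬(a < c ∧ c < b)) ∨ (∀ c ∈ S, a ≤ c ∧ c ≤ b))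

/-- `S` is a `D`-cell: its boundary pairs are edges of the polygon or elements of `D`,
and no other pair of its vertices belongs to `D`. -/
def IsCell (N : ℕ) (D : Set (ℕ × ℕ)) (S : Finset ℕ) : Prop :=
  S.Nonempty ∧ (∀ v ∈ S, 1 ≤ v ∧ v ≤ N) ∧
  (∀ a b : ℕ, CellBoundaryPair S a b → (IsEdge N a b ∨ (a, b) ∈ D)) ∧
  (∀ a ∈ S, ∀ b ∈ S, a < b → ¬ CellBoundaryPair S a b → (a, b) ∉ D)

/-- `{a,b}` lies in the interior of the cell `S`. -/
def InteriorOf (S : Finset ℕ) (a b : ℕ) : Prop :=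
  a ∈ S ∧ b ∈ S ∧ a < b ∧ ¬ CellBoundaryPair S a b

/-- The cyclic predecessor of `x` in the cell `S`: the largest element of `S` below `x`,
or `max S` if `x = min S`. -/
noncomputable def cellPred (S : Finset ℕ) (x : ℕ) : ℕ :=
  if h : (S.filter (fun c => c < x)).Nonempty then (S.filter (fun c => c < x)).max' h
  else if h2 : S.Nonempty then S.max' h2 else 0

/-- The ordered pair `{x,y}`. -/
def ordPair (x y : ℕ) : ℕ × ℕ := (min x y, max x y)

/-- The `D`-mutation of `U`: keep the diagonals of `D`, and replace every diagonal of `U`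
in the interior of a `D`-cell by the diagonal on the cyclic predecessors of its endpoints
in that cell. -/
def mutation (N : ℕ) (U D : Set (ℕ × ℕ)) : Set (ℕ × ℕ) :=
  D ∪ {p | ∃ S : Finset ℕ, IsCell N D S ∧ ∃ a b : ℕ, (a, b) ∈ U ∧ InteriorOf S a b ∧
        p = ordPair (cellPred S a) (cellPred S b)}

section Aux

variable {N : ℕ} {U D : Set (ℕ × ℕ)} {S : Finset ℕ}

lemma filter_lt_nonempty_iff {x : ℕ} :
    (S.filter (fun c => c < x)).Nonempty ↔ ∃ e ∈ S, e < x := by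
  simp [Finset.filter_nonempty_iff]

lemma predLow {x : ℕ} (h : ∃ e ∈ S, e < x) :
    cellPred S x ∈ S ∧ cellPred S x < x ∧ ∀ e ∈ S, e < x → e ≤ cellPred S x := by
  have h' : (S.filter (fun c => c < x)).Nonempty := filter_lt_nonempty_iff.mpr h
  unfold cellPred
  rw [dif_pos h']
  have hm := (S.filter (fun c => c < x)).max'_mem h'
  rw [Finset.mem_filter] at hm
  exact ⟨hm.1, hm.2, fun e he hex => Finset.le_max' (S.filter (fun c => c < x)) e (Finset.mem_filter.mpr ⟨he, hex⟩)⟩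

lemma predTop {x : ℕ} (hS : S.Nonempty) (h : ¬ ∃ e ∈ S, e < x) :
    cellPred S x ∈ S ∧ ∀ e ∈ S, e ≤ cellPred S x := by
  have h' : ¬ (S.filter (fun c => c < x)).Nonempty := fun hn => h (filter_lt_nonempty_iff.mp hn)
  unfold cellPred
  rw [dif_neg h', dif_pos hS]
  exact ⟨S.max'_mem hS, fun e he => S.le_max' e he⟩

lemma pred_mem (hS : S.Nonempty) (x : ℕ) : cellPred S x ∈ S := by
  by_cases h : ∃ e ∈ S, e < x
  · exact (predLow h).1
  · exact (predTop hS h).1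

lemma pred_between {x y : ℕ} (hx : x ∈ S) (hxy : x < y) :
    x ≤ cellPred S y ∧ cellPred S y < y := by
  have h := predLow (S := S) (x := y) ⟨x, hx, hxy⟩
  exact ⟨h.2.2 x hx hxy, h.2.1⟩

lemma pred_lt_pred {x y : ℕ} (hx : x ∈ S) (hxy : x < y) (hw : ∃ e ∈ S, e < x) :
    cellPred S x < cellPred S y :=
  lt_of_lt_of_le (predLow hw).2.1 (pred_between hx hxy).1

lemma pred_ne_of_lt {x y : ℕ} (hx : x ∈ S) (hy : y ∈ S) (hxy : x < y) :
    cellPred S x ≠ cellPred S y := by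
  by_cases hw : ∃ e ∈ S, e < x
  · exact ne_of_lt (pred_lt_pred hx hxy hw)
  · have h1 := (predTop ⟨x, hx⟩ hw).2 y hy
    have h2 := (pred_between hx hxy).2
    omega

lemma pred_ne {x y : ℕ} (hx : x ∈ S) (hy : y ∈ S) (hxy : x ≠ y) :
    cellPred S x ≠ cellPred S y := by
  rcases hxy.lt_or_gt with h | h
  · exact pred_ne_of_lt hx hy h
  · exact (pred_ne_of_lt hy hx h).symm

lemma pred_inj {x y : ℕ} (hx : x ∈ S) (hy : y ∈ S)
    (h : cellPred S x = cellPred S y) : x = y := by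
  by_contra hne; exact pred_ne hx hy hne h

def Adj (S : Finset ℕ) (x y : ℕ) : Prop := cellPred S y = x ∨ cellPred S x = y

lemma cbp_iff_adj {x y : ℕ} (hx : x ∈ S) (hy : y ∈ S) (hxy : x < y) :
    CellBoundaryPair S x y ↔ Adj S x y := by
  constructor
  · rintro ⟨-, -, -, h | h⟩
    · left
      have hb := pred_between hx hxy
      have hm := pred_mem ⟨x, hx⟩ y
      have := h _ hm
      omega
    · right
      by_cases hw : ∃ e ∈ S, e < x
      · obtain ⟨e, he, hex⟩ := hw
        have := h e he
        omega
      · have h1 := (predTop ⟨x, hx⟩ hw).2 y hy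
        have h2 := (h _ (pred_mem ⟨x, hx⟩ x)).2
        omega
  · intro h
    refine ⟨hx, hy, hxy, ?_⟩
    rcases h with h | h
    · left
      intro e he h'
      have := (predLow (S := S) (x := y) ⟨x, hx, hxy⟩).2.2 e he h'.2
      omega
    · right
      intro e he
      by_cases hw : ∃ e ∈ S, e < x
      · exfalso
        have := (predLow hw).2.1
        omega
      · constructor
        · by_contra hlt
          exact hw ⟨e, he, by omega⟩
        · have := (predTop ⟨x, hx⟩ hw).2 e he
          omega

lemma adj_swap {x y : ℕ} : Adj S x y ↔ Adj S y x := or_comm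

lemma cbp'_iff_adj {x y : ℕ} (hx : x ∈ S) (hy : y ∈ S) (hne : x ≠ y) :
    CellBoundaryPair S (min x y) (max x y) ↔ Adj S x y := by
  rcases hne.lt_or_gt with h | h
  · rw [min_eq_left h.le, max_eq_right h.le]
    exact cbp_iff_adj hx hy h
  · rw [min_eq_right h.le, max_eq_left h.le]
    exact (cbp_iff_adj hy hx h).trans adj_swap

lemma adj_pred_iff {x y : ℕ} (hx : x ∈ S) (hy : y ∈ S) :
    Adj S x y ↔ Adj S (cellPred S x) (cellPred S y) := by
  have hS : S.Nonempty := ⟨x, hx⟩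
  constructor
  · rintro (h | h)
    · left; rw [h]
    · right; rw [h]
  · rintro (h | h)
    · left; exact pred_inj (pred_mem hS y) hx h
    · right; exact pred_inj (pred_mem hS x) hy h

lemma cbp_pred_iff {x y : ℕ} (hx : x ∈ S) (hy : y ∈ S) (hne : x ≠ y) :
    CellBoundaryPair S (min x y) (max x y) ↔
      CellBoundaryPair S (min (cellPred S x) (cellPred S y))
        (max (cellPred S x) (cellPred S y)) := by
  have hS : S.Nonempty := ⟨x, hx⟩
  rw [cbp'_iff_adj hx hy hne,
    cbp'_iff_adj (pred_mem hS x) (pred_mem hS y) (pred_ne hx hy hne)]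
  exact adj_pred_iff hx hy

lemma interior_pred {A B : ℕ} (hint : InteriorOf S A B) :
    InteriorOf S (min (cellPred S A) (cellPred S B)) (max (cellPred S A) (cellPred S B)) := by
  obtain ⟨hA, hB, hAB, hncbp⟩ := hint
  have hS : S.Nonempty := ⟨A, hA⟩
  have hne := pred_ne hA hB (by omega)
  refine ⟨?_, ?_, by omega, ?_⟩
  · rcases le_total (cellPred S A) (cellPred S B) with h | h
    · rw [min_eq_left h]; exact pred_mem hS A
    · rw [min_eq_right h]; exact pred_mem hS B
  · rcases le_total (cellPred S A) (cellPred S B) with h | h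
    · rw [max_eq_right h]; exact pred_mem hS B
    · rw [max_eq_left h]; exact pred_mem hS A
  · intro h
    apply hncbp
    have := (cbp_pred_iff hA hB (by omega : A ≠ B)).mpr h
    rwa [min_eq_left hAB.le, max_eq_right hAB.le] at this

lemma interior_diag (hS : IsCell N D S) {x y : ℕ} (h : InteriorOf S x y) :
    IsDiagonal N x y := by
  obtain ⟨hx, hy, hxy, hncbp⟩ := h
  have hrx := hS.2.1 x hx
  have hry := hS.2.1 y hy
  refine ⟨hrx.1, hxy, hry.2, ?_, ?_⟩
  · intro he
    exact hncbp ⟨hx, hy, hxy, Or.inl (fun c hc h' => by omega)⟩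
  · rintro ⟨h1, h2⟩
    exact hncbp ⟨hx, hy, hxy, Or.inr (fun c hc => by
      have := hS.2.1 c hc; omega)⟩

lemma edge_not_diag {a b : ℕ} (he : IsEdge N a b) (hd : IsDiagonal N a b) : False := by
  obtain ⟨-, -, -, h⟩ := he
  obtain ⟨-, -, -, h1, h2⟩ := hd
  rcases h with h | h
  · exact h1 h
  · exact h2 h

lemma core_spec {U : Set (ℕ × ℕ)} {p : ℕ × ℕ} (h : p ∈ core U) :
    p ∈ U ∧ ∀ q ∈ U, ¬ Cross p q := h

lemma sep (hS : IsCell N D S) (hint : ∃ p q, InteriorOf S p q) {v : ℕ}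
    (hv1 : 1 ≤ v) (hv2 : v ≤ N) (hvS : v ∉ S) :
    ∃ x y, (x, y) ∈ D ∧ x < y ∧
      ((x < v ∧ v < y ∧ ∀ e ∈ S, ¬(x < e ∧ e < y)) ∨
        ((v < x ∨ y < v) ∧ ∀ e ∈ S, x ≤ e ∧ e ≤ y)) := by
  obtain ⟨p0, q0, hp0, hq0, hpq0, hncbp⟩ := hint
  obtain ⟨hSne, hrange, hbound, hnotD⟩ := hS
  by_cases hboth : (∃ e ∈ S, e < v) ∧ (∃ e ∈ S, v < e)
  · obtain ⟨⟨el, hel, hel'⟩, ⟨eh, heh, heh'⟩⟩ := hboth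
    have hfx : (S.filter (fun c => c < v)).Nonempty := ⟨el, Finset.mem_filter.mpr ⟨hel, hel'⟩⟩
    have hfy : (S.filter (fun c => v < c)).Nonempty := ⟨eh, Finset.mem_filter.mpr ⟨heh, heh'⟩⟩
    set x := (S.filter (fun c => c < v)).max' hfx with hxdef
    set y := (S.filter (fun c => v < c)).min' hfy with hydef
    have hxm : x ∈ S.filter (fun c => c < v) := Finset.max'_mem _ hfx
    have hym : y ∈ S.filter (fun c => v < c) := Finset.min'_mem _ hfy
    rw [Finset.mem_filter] at hxm hym
    obtain ⟨hxS, hxv⟩ := hxm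
    obtain ⟨hyS, hvy⟩ := hym
    have hgap : ∀ e ∈ S, ¬(x < e ∧ e < y) := by
      intro e he h'
      rcases lt_trichotomy e v with h | h | h
      · have := Finset.le_max' (S.filter (fun c => c < v)) e (Finset.mem_filter.mpr ⟨he, h⟩)
        omega
      · exact hvS (h ▸ he)
      · have := Finset.min'_le (S.filter (fun c => v < c)) e (Finset.mem_filter.mpr ⟨he, h⟩)
        omega
    have hcbp : CellBoundaryPair S x y := ⟨hxS, hyS, by omega, Or.inl hgap⟩
    rcases hbound x y hcbp with hedge | hDxy
    · exfalso
      rcases hedge.2.2.2 with h | h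
      · omega
      · apply hncbp
        have hgp := hgap p0 hp0
        have hgq := hgap q0 hq0
        have hrp := hrange p0 hp0
        have hrq := hrange q0 hq0
        have h1 : p0 = 1 ∧ q0 = N := by omega
        exact ⟨hp0, hq0, hpq0, Or.inr (fun c hc => by have := hrange c hc; omega)⟩
    · exact ⟨x, y, hDxy, by omega, Or.inl ⟨hxv, hvy, hgap⟩⟩
  · have hmS : S.min' hSne ∈ S := S.min'_mem hSne
    have hMS : S.max' hSne ∈ S := S.max'_mem hSne
    set m := S.min' hSne with hmdef
    set M := S.max' hSne with hMdef
    have hrangeAll : ∀ e ∈ S, m ≤ e ∧ e ≤ M := fun e he => ⟨S.min'_le e he, S.le_max' e he⟩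
    have hside : v < m ∨ M < v := by
      rcases not_and_or.mp hboth with h | h
      · push_neg at h
        have h1 := h m hmS
        have h2 : v ≠ m := fun hh => hvS (hh ▸ hmS)
        omega
      · push_neg at h
        have h1 := h M hMS
        have h2 : v ≠ M := fun hh => hvS (hh ▸ hMS)
        omega
    have hMm : m < M := by
      have h1 := hrangeAll p0 hp0
      have h2 := hrangeAll q0 hq0
      omega
    have hcbp : CellBoundaryPair S m M := ⟨hmS, hMS, hMm, Or.inr hrangeAll⟩
    rcases hbound m M hcbp with hedge | hDmM
    · exfalso
      rcases hedge.2.2.2 with h | h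
      · apply hncbp
        refine ⟨hp0, hq0, hpq0, Or.inl (fun c hc h' => ?_)⟩
        have h1 := hrangeAll c hc
        have h2 := hrangeAll p0 hp0
        have h3 := hrangeAll q0 hq0
        omega
      · omega
    · exact ⟨m, M, hDmM, hMm, Or.inr ⟨hside, hrangeAll⟩⟩

lemma no_cross_cell (hU : IsPtolemy N U) (hDc : D ⊆ core U) (hS : IsCell N D S)
    (hint : ∃ p q, InteriorOf S p q) {x y c w : ℕ}
    (hxy : (x, y) ∈ D) (hc : c ∈ S) (hw : w ∈ S)
    (h1 : x < c) (h2 : c < y) (h3 : w < x ∨ y < w) : False := by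
  obtain ⟨hx1, hxylt, hyN, -, -⟩ := hU.1 _ (core_spec (hDc hxy)).1
  have noD : ∀ p ∈ D, ∀ q ∈ D, ¬ Cross p q :=
    fun p hp q hq => (core_spec (hDc hp)).2 q (core_spec (hDc hq)).1
  by_cases hxS : x ∈ S
  · by_cases hyS : y ∈ S
    · have hcbp : CellBoundaryPair S x y := by
        by_contra hn
        exact hS.2.2.2 x hxS y hyS hxylt hn hxy
      rcases hcbp.2.2.2 with h | h
      · exact h c hc ⟨h1, h2⟩
      · have := h w hw; omega
    · obtain ⟨x', y', hD', hlt', hcase⟩ := sep hS hint (by omega : 1 ≤ y) hyN hyS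
      rcases hcase with ⟨ha', hb', hgap⟩ | ⟨hside, hrange⟩
      · have hcx : c ≤ x' := by
          have := hgap c hc; omega
        exact noD _ hxy _ hD' (Or.inl ⟨by omega, by omega, hb'⟩)
      · have hcb := hrange c hc
        have hwb := hrange w hw
        rcases hside with h | h
        · omega
        · rcases h3 with h3 | h3
          · exact noD _ hxy _ hD' (Or.inr ⟨by omega, by omega, h⟩)
          · omega
  · obtain ⟨x', y', hD', hlt', hcase⟩ := sep hS hint hx1 (by omega : x ≤ N) hxS
    rcases hcase with ⟨ha', hb', hgap⟩ | ⟨hside, hrange⟩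
    · have hcy : y' ≤ c := by
        have := hgap c hc; omega
      exact noD _ hD' _ hxy (Or.inl ⟨ha', by omega, by omega⟩)
    · have hcb := hrange c hc
      have hwb := hrange w hw
      rcases hside with h | h
      · rcases lt_or_ge y y' with h' | h'
        · exact noD _ hxy _ hD' (Or.inl ⟨h, by omega, h'⟩)
        · omega
      · omega

lemma cells_eq (hU : IsPtolemy N U) (hDc : D ⊆ core U) {S1 S2 : Finset ℕ}
    (hS1 : IsCell N D S1) (hS2 : IsCell N D S2) {a b c d : ℕ}
    (h1 : InteriorOf S1 a c) (h2 : InteriorOf S2 b d)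
    (hab : a < b) (hbc : b < c) (hcd : c < d) : S1 = S2 := by
  have hi1 : ∃ p q, InteriorOf S1 p q := ⟨a, c, h1⟩
  have hi2 : ∃ p q, InteriorOf S2 p q := ⟨b, d, h2⟩
  obtain ⟨haS1, hcS1, -, -⟩ := h1
  obtain ⟨hbS2, hdS2, -, -⟩ := h2
  have hrb := hS2.2.1 b hbS2
  have hrd := hS2.2.1 d hdS2
  have hra := hS1.2.1 a haS1
  have hrc := hS1.2.1 c hcS1
  have hbS1 : b ∈ S1 := by
    by_contra hb
    obtain ⟨x, y, hDxy, hxy, hcase⟩ := sep hS1 hi1 hrb.1 hrb.2 hb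
    rcases hcase with ⟨hx, hy, hgap⟩ | ⟨hside, hrange⟩
    · have hax := hgap a haS1
      have hcy := hgap c hcS1
      exact no_cross_cell hU hDc hS2 hi2 hDxy hbS2 hdS2 hx hy (by omega)
    · have g1 := hrange a haS1
      have g2 := hrange c hcS1
      omega
  have hdS1 : d ∈ S1 := by
    by_contra hd
    obtain ⟨x, y, hDxy, hxy, hcase⟩ := sep hS1 hi1 hrd.1 hrd.2 hd
    rcases hcase with ⟨hx, hy, hgap⟩ | ⟨hside, hrange⟩
    · have hax := hgap a haS1
      have hcy := hgap c hcS1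
      exact no_cross_cell hU hDc hS2 hi2 hDxy hdS2 hbS2 hx hy (by omega)
    · have g1 := hrange a haS1
      have g2 := hrange c hcS1
      rcases hside with h | h
      · omega
      · exact no_cross_cell hU hDc hS2 hi2 hDxy hbS2 hdS2 (by omega) (by omega) (by omega)
  have haS2 : a ∈ S2 := by
    by_contra hv
    obtain ⟨x, y, hDxy, hxy, hcase⟩ := sep hS2 hi2 hra.1 hra.2 hv
    rcases hcase with ⟨hx, hy, hgap⟩ | ⟨hside, hrange⟩
    · have gb := hgap b hbS2
      exact no_cross_cell hU hDc hS1 hi1 hDxy haS1 hcS1 hx hy (by omega)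
    · have gb := hrange b hbS2
      have gd := hrange d hdS2
      rcases hside with h | h
      · exact no_cross_cell hU hDc hS1 hi1 hDxy hcS1 haS1 (by omega) (by omega) (by omega)
      · omega
  have hcS2 : c ∈ S2 := by
    by_contra hv
    obtain ⟨x, y, hDxy, hxy, hcase⟩ := sep hS2 hi2 hrc.1 hrc.2 hv
    rcases hcase with ⟨hx, hy, hgap⟩ | ⟨hside, hrange⟩
    · have gb := hgap b hbS2
      have gd := hgap d hdS2
      exact no_cross_cell hU hDc hS1 hi1 hDxy hcS1 haS1 hx hy (by omega)
    · have gb := hrange b hbS2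
      have gd := hrange d hdS2
      omega
  apply Finset.ext
  intro v
  constructor
  · intro hv1
    by_contra hv2
    have hrv := hS1.2.1 v hv1
    obtain ⟨x, y, hDxy, hxy, hcase⟩ := sep hS2 hi2 hrv.1 hrv.2 hv2
    rcases hcase with ⟨hx, hy, hgap⟩ | ⟨hside, hrange⟩
    · have ga := hgap a haS2
      have gb := hgap b hbS2
      have gc := hgap c hcS2
      have gd := hgap d hdS2
      have hw : y < d ∨ b < x := by omega
      rcases hw with h | h
      · exact no_cross_cell hU hDc hS1 hi1 hDxy hv1 hdS1 hx hy (Or.inr h)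
      · exact no_cross_cell hU hDc hS1 hi1 hDxy hv1 hbS1 hx hy (Or.inl h)
    · have g1 := hrange a haS2
      have g2 := hrange c hcS2
      exact no_cross_cell hU hDc hS1 hi1 hDxy hbS1 hv1 (by omega) (by omega) hside
  · intro hv2
    by_contra hv1
    have hrv := hS2.2.1 v hv2
    obtain ⟨x, y, hDxy, hxy, hcase⟩ := sep hS1 hi1 hrv.1 hrv.2 hv1
    rcases hcase with ⟨hx, hy, hgap⟩ | ⟨hside, hrange⟩
    · have ga := hgap a haS1
      have gb := hgap b hbS1
      have gc := hgap c hcS1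
      have gd := hgap d hdS1
      have hw : y < d ∨ b < x := by omega
      rcases hw with h | h
      · exact no_cross_cell hU hDc hS2 hi2 hDxy hv2 hdS2 hx hy (Or.inr h)
      · exact no_cross_cell hU hDc hS2 hi2 hDxy hv2 hbS2 hx hy (Or.inl h)
    · have g1 := hrange a haS1
      have g2 := hrange c hcS1
      exact no_cross_cell hU hDc hS2 hi2 hDxy hbS2 hv2 (by omega) (by omega) hside

lemma cross_rev {x1 y1 x2 y2 : ℕ}
    (h1 : x1 ∈ S) (h2 : y1 ∈ S) (h3 : x2 ∈ S) (h4 : y2 ∈ S)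
    (hp : x1 < y1) (hq : x2 < y2)
    (d13 : x1 ≠ x2) (d14 : x1 ≠ y2) (d23 : y1 ≠ x2) (d24 : y1 ≠ y2)
    (hcross : Cross (ordPair (cellPred S x1) (cellPred S y1))
      (ordPair (cellPred S x2) (cellPred S y2))) :
    Cross (x1, y1) (x2, y2) := by
  have hS : S.Nonempty := ⟨x1, h1⟩
  simp only [Cross, ordPair] at hcross ⊢
  by_cases hL : ∃ e ∈ S, e < min x1 x2
  · obtain ⟨e, he, hel⟩ := hL
    have w : ∀ u, min x1 x2 ≤ u → ∃ e' ∈ S, e' < u := fun u hu => ⟨e, he, by omega⟩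
    have k1 : cellPred S x1 < cellPred S y1 := pred_lt_pred h1 hp (w x1 (min_le_left _ _))
    have k2 : cellPred S x2 < cellPred S y2 := pred_lt_pred h3 hq (w x2 (min_le_right _ _))
    have i1 : x1 < x2 → cellPred S x1 < cellPred S x2 :=
      fun h => pred_lt_pred h1 h (w x1 (min_le_left _ _))
    have i1' : x2 < x1 → cellPred S x2 < cellPred S x1 :=
      fun h => pred_lt_pred h3 h (w x2 (min_le_right _ _))
    have i2 : x1 < y2 → cellPred S x1 < cellPred S y2 :=
      fun h => pred_lt_pred h1 h (w x1 (min_le_left _ _))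
    have i2' : y2 < x1 → cellPred S y2 < cellPred S x1 :=
      fun h => pred_lt_pred h4 h (w y2 (by omega))
    have i3 : y1 < x2 → cellPred S y1 < cellPred S x2 :=
      fun h => pred_lt_pred h2 h (w y1 (by omega))
    have i3' : x2 < y1 → cellPred S x2 < cellPred S y1 :=
      fun h => pred_lt_pred h3 h (w x2 (min_le_right _ _))
    have i4 : y1 < y2 → cellPred S y1 < cellPred S y2 :=
      fun h => pred_lt_pred h2 h (w y1 (by omega))
    have i4' : y2 < y1 → cellPred S y2 < cellPred S y1 :=
      fun h => pred_lt_pred h4 h (w y2 (by omega))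
    omega
  · rcases le_total x1 x2 with hle | hle
    · have htop : ∀ u ∈ S, u ≤ cellPred S x1 :=
        (predTop hS (by rintro ⟨e, he, hlt⟩; exact hL ⟨e, he, by omega⟩)).2
      have t1 : cellPred S y1 ≤ cellPred S x1 := htop _ (pred_mem hS y1)
      have t2 : cellPred S x2 ≤ cellPred S x1 := htop _ (pred_mem hS x2)
      have t3 : cellPred S y2 ≤ cellPred S x1 := htop _ (pred_mem hS y2)
      have n1 : cellPred S y1 ≠ cellPred S x1 := pred_ne h2 h1 (by omega)
      have n2 : cellPred S x2 ≠ cellPred S x1 := pred_ne h3 h1 (Ne.symm d13)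
      have n3 : cellPred S y2 ≠ cellPred S x1 := pred_ne h4 h1 (Ne.symm d14)
      have hx1x2 : x1 < x2 := by omega
      have j1 : x2 < y1 → cellPred S x2 < cellPred S y1 :=
        fun h => pred_lt_pred h3 h ⟨x1, h1, hx1x2⟩
      have j1' : y1 < x2 → cellPred S y1 < cellPred S x2 :=
        fun h => pred_lt_pred h2 h ⟨x1, h1, hp⟩
      have j2 : cellPred S x2 < cellPred S y2 := pred_lt_pred h3 hq ⟨x1, h1, hx1x2⟩
      have j3 : y1 < y2 → cellPred S y1 < cellPred S y2 :=
        fun h => pred_lt_pred h2 h ⟨x1, h1, hp⟩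
      have j3' : y2 < y1 → cellPred S y2 < cellPred S y1 :=
        fun h => pred_lt_pred h4 h ⟨x1, h1, by omega⟩
      omega
    · have htop : ∀ u ∈ S, u ≤ cellPred S x2 :=
        (predTop hS (by rintro ⟨e, he, hlt⟩; exact hL ⟨e, he, by omega⟩)).2
      have t1 : cellPred S y1 ≤ cellPred S x2 := htop _ (pred_mem hS y1)
      have t2 : cellPred S x1 ≤ cellPred S x2 := htop _ (pred_mem hS x1)
      have t3 : cellPred S y2 ≤ cellPred S x2 := htop _ (pred_mem hS y2)
      have n1 : cellPred S y1 ≠ cellPred S x2 := pred_ne h2 h3 d23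
      have n2 : cellPred S x1 ≠ cellPred S x2 := pred_ne h1 h3 d13
      have n3 : cellPred S y2 ≠ cellPred S x2 := pred_ne h4 h3 (by omega)
      have hx2x1 : x2 < x1 := by omega
      have j1 : x1 < y2 → cellPred S x1 < cellPred S y2 :=
        fun h => pred_lt_pred h1 h ⟨x2, h3, hx2x1⟩
      have j1' : y2 < x1 → cellPred S y2 < cellPred S x1 :=
        fun h => pred_lt_pred h4 h ⟨x2, h3, hq⟩
      have j2 : cellPred S x1 < cellPred S y1 := pred_lt_pred h1 hp ⟨x2, h3, hx2x1⟩
      have j3 : y1 < y2 → cellPred S y1 < cellPred S y2 :=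
        fun h => pred_lt_pred h2 h ⟨x2, h3, by omega⟩
      have j3' : y2 < y1 → cellPred S y2 < cellPred S y1 :=
        fun h => pred_lt_pred h4 h ⟨x2, h3, hq⟩
      omega

lemma conc (hU : IsPtolemy N U) (hS : IsCell N D S) {X Y u v : ℕ}
    (hX : X ∈ S) (hY : Y ∈ S) (hne : X ≠ Y)
    (hu : cellPred S X = u) (hv : cellPred S Y = v) (huv : u < v)
    (hmem : IsDiagonal N (min X Y) (max X Y) → (min X Y, max X Y) ∈ U)
    (hdiag : IsDiagonal N u v) : (u, v) ∈ mutation N U D := by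
  by_cases hb : CellBoundaryPair S u v
  · rcases hS.2.2.1 u v hb with he | hD'
    · exact (edge_not_diag he hdiag).elim
    · exact Or.inl hD'
  · have hcbp' : ¬ CellBoundaryPair S (min X Y) (max X Y) := by
      intro h
      apply hb
      have := (cbp_pred_iff hX hY hne).mp h
      rw [hu, hv] at this
      rwa [min_eq_left huv.le, max_eq_right huv.le] at this
    have hint : InteriorOf S (min X Y) (max X Y) := by
      refine ⟨?_, ?_, ?_, hcbp'⟩
      · rcases le_total X Y with h | h
        · rw [min_eq_left h]; exact hX
        · rw [min_eq_right h]; exact hY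
      · rcases le_total X Y with h | h
        · rw [max_eq_right h]; exact hY
        · rw [max_eq_left h]; exact hX
      · omega
    refine Or.inr ⟨S, hS, min X Y, max X Y, hmem (interior_diag hS hint), hint, ?_⟩
    rcases hne.lt_or_gt with h | h
    · rw [min_eq_left h.le, max_eq_right h.le, hu, hv]
      simp only [ordPair, Prod.mk.injEq]
      omega
    · rw [min_eq_right h.le, max_eq_left h.le, hv, hu]
      simp only [ordPair, Prod.mk.injEq]
      omega

lemma main_case (hU : IsPtolemy N U) (hS : IsCell N D S) {A1 B1 A2 B2 a b c d : ℕ}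
    (hA1 : A1 ∈ S) (hB1 : B1 ∈ S) (hA2 : A2 ∈ S) (hB2 : B2 ∈ S)
    (hne1 : A1 ≠ B1) (hne2 : A2 ≠ B2)
    (m1 : (min A1 B1, max A1 B1) ∈ U) (m2 : (min A2 B2, max A2 B2) ∈ U)
    (e1 : cellPred S A1 = a) (f1 : cellPred S B1 = c)
    (e2 : cellPred S A2 = b) (f2 : cellPred S B2 = d)
    (hab : a < b) (hbc : b < c) (hcd : c < d) :
    (IsDiagonal N a b → (a, b) ∈ mutation N U D) ∧
    (IsDiagonal N b c → (b, c) ∈ mutation N U D) ∧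
    (IsDiagonal N c d → (c, d) ∈ mutation N U D) ∧
    (IsDiagonal N a d → (a, d) ∈ mutation N U D) := by
  have d13 : A1 ≠ A2 := fun h => by rw [h, e2] at e1; omega
  have d14 : A1 ≠ B2 := fun h => by rw [h, f2] at e1; omega
  have d23 : B1 ≠ A2 := fun h => by rw [h, e2] at f1; omega
  have d24 : B1 ≠ B2 := fun h => by rw [h, f2] at f1; omega
  have op1 : ordPair (cellPred S (min A1 B1)) (cellPred S (max A1 B1)) = (a, c) := by
    rcases hne1.lt_or_gt with h | h
    · rw [min_eq_left h.le, max_eq_right h.le, e1, f1]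
      simp only [ordPair, Prod.mk.injEq]
      omega
    · rw [min_eq_right h.le, max_eq_left h.le, f1, e1]
      simp only [ordPair, Prod.mk.injEq]
      omega
  have op2 : ordPair (cellPred S (min A2 B2)) (cellPred S (max A2 B2)) = (b, d) := by
    rcases hne2.lt_or_gt with h | h
    · rw [min_eq_left h.le, max_eq_right h.le, e2, f2]
      simp only [ordPair, Prod.mk.injEq]
      omega
    · rw [min_eq_right h.le, max_eq_left h.le, f2, e2]
      simp only [ordPair, Prod.mk.injEq]
      omega
  have hx1 : min A1 B1 ∈ S := by
    rcases le_total A1 B1 with h | h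
    · rw [min_eq_left h]; exact hA1
    · rw [min_eq_right h]; exact hB1
  have hy1 : max A1 B1 ∈ S := by
    rcases le_total A1 B1 with h | h
    · rw [max_eq_right h]; exact hB1
    · rw [max_eq_left h]; exact hA1
  have hx2 : min A2 B2 ∈ S := by
    rcases le_total A2 B2 with h | h
    · rw [min_eq_left h]; exact hA2
    · rw [min_eq_right h]; exact hB2
  have hy2 : max A2 B2 ∈ S := by
    rcases le_total A2 B2 with h | h
    · rw [max_eq_right h]; exact hB2
    · rw [max_eq_left h]; exact hA2
  have hcross0 : Cross (ordPair (cellPred S (min A1 B1)) (cellPred S (max A1 B1)))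
      (ordPair (cellPred S (min A2 B2)) (cellPred S (max A2 B2))) := by
    rw [op1, op2]
    exact Or.inl ⟨hab, hbc, hcd⟩
  have hcr := cross_rev hx1 hy1 hx2 hy2 (by omega) (by omega) (by omega) (by omega)
    (by omega) (by omega) hcross0
  have mixed : ∀ X Y : ℕ, (X = A1 ∨ X = B1) → (Y = A2 ∨ Y = B2) →
      IsDiagonal N (min X Y) (max X Y) → (min X Y, max X Y) ∈ U := by
    intro X Y hXo hYo hdg
    have hXm : X = min A1 B1 ∨ X = max A1 B1 := by rcases hXo with rfl | rfl <;> omega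
    have hYm : Y = min A2 B2 ∨ Y = max A2 B2 := by rcases hYo with rfl | rfl <;> omega
    rcases hcr with ⟨c1, c2, c3⟩ | ⟨c1, c2, c3⟩
    · simp only [Cross] at c1 c2 c3
      have quad := hU.2 _ _ _ _ m1 m2 c1 c2 c3
      rcases hXm with hXe | hXe <;> rcases hYm with hYe | hYe
      · have hmm : min X Y = X ∧ max X Y = Y := by constructor <;> omega
        rw [hmm.1, hmm.2, hXe, hYe] at hdg ⊢
        exact quad.1 hdg
      · have hmm : min X Y = X ∧ max X Y = Y := by constructor <;> omega
        rw [hmm.1, hmm.2, hXe, hYe] at hdg ⊢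
        exact quad.2.2.2 hdg
      · have hmm : min X Y = Y ∧ max X Y = X := by constructor <;> omega
        rw [hmm.1, hmm.2, hXe, hYe] at hdg ⊢
        exact quad.2.1 hdg
      · have hmm : min X Y = X ∧ max X Y = Y := by constructor <;> omega
        rw [hmm.1, hmm.2, hXe, hYe] at hdg ⊢
        exact quad.2.2.1 hdg
    · simp only [Cross] at c1 c2 c3
      have quad := hU.2 _ _ _ _ m2 m1 c1 c2 c3
      rcases hXm with hXe | hXe <;> rcases hYm with hYe | hYe
      · have hmm : min X Y = Y ∧ max X Y = X := by constructor <;> omega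
        rw [hmm.1, hmm.2, hXe, hYe] at hdg ⊢
        exact quad.1 hdg
      · have hmm : min X Y = X ∧ max X Y = Y := by constructor <;> omega
        rw [hmm.1, hmm.2, hXe, hYe] at hdg ⊢
        exact quad.2.1 hdg
      · have hmm : min X Y = Y ∧ max X Y = X := by constructor <;> omega
        rw [hmm.1, hmm.2, hXe, hYe] at hdg ⊢
        exact quad.2.2.2 hdg
      · have hmm : min X Y = Y ∧ max X Y = X := by constructor <;> omega
        rw [hmm.1, hmm.2, hXe, hYe] at hdg ⊢
        exact quad.2.2.1 hdg
  refine ⟨?_, ?_, ?_, ?_⟩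
  · exact fun h => conc hU hS hA1 hA2 d13 e1 e2 hab (mixed A1 A2 (Or.inl rfl) (Or.inl rfl)) h
  · intro h
    refine conc hU hS hA2 hB1 (Ne.symm d23) e2 f1 hbc ?_ h
    have hmx := mixed B1 A2 (Or.inr rfl) (Or.inl rfl)
    rwa [min_comm, max_comm] at hmx
  · exact fun h => conc hU hS hB1 hB2 d24 f1 f2 hcd (mixed B1 B2 (Or.inr rfl) (Or.inr rfl)) h
  · exact fun h =>
      conc hU hS hA1 hB2 d14 e1 f2 (by omega) (mixed A1 B2 (Or.inl rfl) (Or.inr rfl)) h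

end Aux

/-- the `D`-mutation of a Ptolemy diagram of the `(n+3)`-gon is again a
Ptolemy diagram. -/
theorem stmt17 (n : ℕ) (hn : 1 ≤ n) (U D : Set (ℕ × ℕ))
    (hU : IsPtolemy (n + 3) U) (hD : D ⊆ core U) :
    IsPtolemy (n + 3) (mutation (n + 3) U D) := by
  constructor
  · rintro p (hp | ⟨S, hS, A, B, hAB, hint, rfl⟩)
    · exact hU.1 p (core_spec (hD hp)).1
    · exact interior_diag hS (interior_pred hint)
  · intro a b c d hac hbd hab hbc hcd
    have noD : ∀ p ∈ D, ∀ q ∈ D, ¬ Cross p q :=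
      fun p hp q hq => (core_spec (hD hp)).2 q (core_spec (hD hq)).1
    rcases hac with hacD | ⟨S1, hS1, A1, B1, hm1, hint1, heq1⟩
    · rcases hbd with hbdD | ⟨S2, hS2, A2, B2, hm2, hint2, heq2⟩
      · exact absurd (Or.inl ⟨hab, hbc, hcd⟩ : Cross (a, c) (b, d)) (noD _ hacD _ hbdD)
      · exfalso
        have hI2 : InteriorOf S2 b d := by
          simp only [ordPair, Prod.mk.injEq] at heq2
          rw [heq2.1, heq2.2]
          exact interior_pred hint2
        exact no_cross_cell hU hD hS2 ⟨_, _, hI2⟩ hacD hI2.1 hI2.2.1 hab hbc (Or.inr hcd)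
    · have hI1 : InteriorOf S1 a c := by
        simp only [ordPair, Prod.mk.injEq] at heq1
        rw [heq1.1, heq1.2]
        exact interior_pred hint1
      rcases hbd with hbdD | ⟨S2, hS2, A2, B2, hm2, hint2, heq2⟩
      · exfalso
        exact no_cross_cell hU hD hS1 ⟨_, _, hI1⟩ hbdD hI1.2.1 hI1.1 hbc hcd (Or.inl hab)
      · have hI2 : InteriorOf S2 b d := by
          simp only [ordPair, Prod.mk.injEq] at heq2
          rw [heq2.1, heq2.2]
          exact interior_pred hint2
        have hSeq := cells_eq hU hD hS1 hS2 hI1 hI2 hab hbc hcd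
        subst hSeq
        simp only [ordPair, Prod.mk.injEq] at heq1 heq2
        obtain ⟨hA1S, hB1S, hor1, -⟩ := hint1
        obtain ⟨hA2S, hB2S, hor2, -⟩ := hint2
        have hasg1 : (cellPred S1 A1 = a ∧ cellPred S1 B1 = c) ∨
            (cellPred S1 B1 = a ∧ cellPred S1 A1 = c) := by omega
        have hasg2 : (cellPred S1 A2 = b ∧ cellPred S1 B2 = d) ∨
            (cellPred S1 B2 = b ∧ cellPred S1 A2 = d) := by omega
        have hm1' : (min A1 B1, max A1 B1) ∈ U := by
          rw [min_eq_left hor1.le, max_eq_right hor1.le]; exact hm1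
        have hm2' : (min A2 B2, max A2 B2) ∈ U := by
          rw [min_eq_left hor2.le, max_eq_right hor2.le]; exact hm2
        have hm1'' : (min B1 A1, max B1 A1) ∈ U := by
          rw [min_comm, max_comm]; exact hm1'
        have hm2'' : (min B2 A2, max B2 A2) ∈ U := by
          rw [min_comm, max_comm]; exact hm2'
        rcases hasg1 with ⟨u1, u2⟩ | ⟨u1, u2⟩ <;> rcases hasg2 with ⟨w1, w2⟩ | ⟨w1, w2⟩
        · exact main_case hU hS1 hA1S hB1S hA2S hB2S (by omega) (by omega) hm1' hm2'
            u1 u2 w1 w2 hab hbc hcd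
        · exact main_case hU hS1 hA1S hB1S hB2S hA2S (by omega) (by omega) hm1' hm2''
            u1 u2 w1 w2 hab hbc hcd
        · exact main_case hU hS1 hB1S hA1S hA2S hB2S (by omega) (by omega) hm1'' hm2'
            u1 u2 w1 w2 hab hbc hcd
        · exact main_case hU hS1 hB1S hA1S hB2S hA2S (by omega) (by omega) hm1'' hm2''
            u1 u2 w1 w2 hab hbc hcd

end PolygonPtolemy
end

section
/- Let U be a Ptolemy diagram of the ∞-gon P_∞ and D ⊆ I(U) a subset which is locally finite or has a fountain. Then every arc of U which is not in D lies in the interior of some (finite or infinite) D-cell; that is, U is divided into D-cells by the arcs in D. -/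
/-! The cell of an arc `{a,b} ∉ D` consists of the vertices that no arc of `D` separates from
`{a,b}`. As the arcs of `D` cross neither each other nor `{a,b}`, between two cell
vertices `u + 2 ≤ v` with `{u,v} ∉ D` lies a third one, the far end of the longest arc of `D`
leaving `u` below `v` (or `u + 1`). Hence consecutive cell vertices are joined by edges or arcs
of `D`, and an arc of `D` joins two cell vertices only as a boundary pair of the cell.

If some arc of `D` encloses `{a,b}`, the innermost one is the outer boundary of a finite cell.
Otherwise `D` has no fountain, since a fountain would supply an enclosing arc, so `D` is locally
finite; then the same longest-arc step shows that the cell is unbounded in both directions, and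
enumerating it by `ℤ` gives an infinite cell. -/

namespace InfinityGonPtolemy

/-- `{a,b}` (with `a < b`) is an arc of the ∞-gon. -/
def IsArc (a b : ℤ) : Prop := a + 2 ≤ b

/-- `{a,b}` (with `a < b`) is an edge of the ∞-gon. -/
def IsEdge (a b : ℤ) : Prop := b = a + 1

/-- Two arcs, given as ordered pairs, cross each other. -/
def Cross (p q : ℤ × ℤ) : Prop :=
  (p.1 < q.1 ∧ q.1 < p.2 ∧ p.2 < q.2) ∨ (q.1 < p.1 ∧ p.1 < q.2 ∧ q.2 < p.2)

/-- `n` is a left fountain of `A`. -/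
def IsLeftFountain (A : Set (ℤ × ℤ)) (n : ℤ) : Prop :=
  {m : ℤ | (m, n) ∈ A}.Infinite

/-- `n` is a right fountain of `A`. -/
def IsRightFountain (A : Set (ℤ × ℤ)) (n : ℤ) : Prop :=
  {p : ℤ | (n, p) ∈ A}.Infinite

/-- `A` has a fountain. -/
def HasFountain (A : Set (ℤ × ℤ)) : Prop :=
  ∃ n : ℤ, IsLeftFountain A n ∧ IsRightFountain A n

/-- `A` is locally finite: only finitely many arcs of `A` end in any given integer. -/
def LocallyFinite (A : Set (ℤ × ℤ)) : Prop :=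
  ∀ n : ℤ, {m : ℤ | (m, n) ∈ A ∨ (n, m) ∈ A}.Finite

/-- `U` is a Ptolemy diagram of the ∞-gon: (i) whenever two arcs `{a,c}` and `{b,d}` of
`U` cross, those of `{a,b}`, `{b,c}`, `{c,d}`, `{a,d}` which are arcs belong to `U`;
(ii) every right fountain of `U` is a fountain. -/
def IsPtolemy (U : Set (ℤ × ℤ)) : Prop :=
  (∀ p ∈ U, IsArc p.1 p.2) ∧
  (∀ a b c d : ℤ, (a, c) ∈ U → (b, d) ∈ U → a < b → b < c → c < d →
    (IsArc a b → (a, b) ∈ U) ∧ (IsArc b c → (b, c) ∈ U) ∧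
    (IsArc c d → (c, d) ∈ U) ∧ (IsArc a d → (a, d) ∈ U)) ∧
  (∀ n : ℤ, IsRightFountain U n → IsLeftFountain U n)

/-- `I(U)`: the arcs of `U` crossing no arc of `U`. -/
def core (U : Set (ℤ × ℤ)) : Set (ℤ × ℤ) :=
  {p | p ∈ U ∧ ∀ q ∈ U, ¬ Cross p q}

/-- `{a,b}` (with `a < b`, both in `S`) is a boundary pair of the finite cell `S`:
either `a` and `b` are consecutive in `S`, or `a = min S` and `b = max S`. -/
def CellBoundaryPair (S : Finset ℤ) (a b : ℤ) : Prop :=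
  a ∈ S ∧ b ∈ S ∧ a < b ∧
    ((∀ c ∈ S, ¬(a < c ∧ c < b)) ∨ (∀ c ∈ S, a ≤ c ∧ c ≤ b))

/-- `S` is a finite `D`-cell. -/
def IsFiniteCell (D : Set (ℤ × ℤ)) (S : Finset ℤ) : Prop :=
  S.Nonempty ∧
  (∀ a b : ℤ, CellBoundaryPair S a b → (IsEdge a b ∨ (a, b) ∈ D)) ∧
  (∀ a ∈ S, ∀ b ∈ S, a < b → ¬ CellBoundaryPair S a b → (a, b) ∉ D)

/-- `{a,b}` lies in the interior of the finite cell `S`. -/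
def FiniteInterior (S : Finset ℤ) (a b : ℤ) : Prop :=
  a ∈ S ∧ b ∈ S ∧ a < b ∧ ¬ CellBoundaryPair S a b

/-- The strictly increasing enumeration `f` is an infinite `D`-cell: consecutive pairs
are edges or elements of `D`, and no other pair of its vertices belongs to `D`. -/
def IsInfiniteCell (D : Set (ℤ × ℤ)) (f : ℤ → ℤ) : Prop :=
  StrictMono f ∧
  (∀ t : ℤ, IsEdge (f t) (f (t + 1)) ∨ (f t, f (t + 1)) ∈ D) ∧
  (∀ k l : ℤ, k + 2 ≤ l → (f k, f l) ∉ D)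

/-- `{a,b}` lies in the interior of the infinite cell `f`. -/
def InfiniteInterior (f : ℤ → ℤ) (a b : ℤ) : Prop :=
  ∃ k l : ℤ, k + 2 ≤ l ∧ a = f k ∧ b = f l

theorem exists_strictMono_range_eq_of_unbounded {s : Set ℤ} (hne : s.Nonempty)
    (hgt : ∀ x ∈ s, ∃ y ∈ s, x < y) (hlt : ∀ x ∈ s, ∃ y ∈ s, y < x) :
    ∃ f : ℤ → ℤ, StrictMono f ∧ Set.range f = s := by
  classical
  have : Nonempty s := hne.to_subtype
  let := LinearLocallyFiniteOrder.succOrder s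
  let := LinearLocallyFiniteOrder.predOrder s
  have : NoMaxOrder s := ⟨fun x => (hgt x x.2).elim fun y hy => ⟨⟨y, hy.1⟩, hy.2⟩⟩
  have : NoMinOrder s := ⟨fun x => (hlt x x.2).elim fun y hy => ⟨⟨y, hy.1⟩, hy.2⟩⟩
  let e : ℤ ≃o s := orderIsoIntOfLinearSuccPredArch.symm
  refine ⟨Subtype.val ∘ e, (Subtype.strictMono_coe _).comp e.strictMono, ?_⟩
  rw [Set.range_comp, e.range_eq, Set.image_univ, Subtype.range_coe]

def Encloses (q : ℤ × ℤ) (a b : ℤ) : Prop := q.1 ≤ a ∧ b ≤ q.2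

/-- The vertices of the `D`-cell containing `{a,b}`: an arc of `D` enclosing `{a,b}` cuts off
the vertices outside it, any other arc of `D` cuts off the vertices strictly inside it. -/
def cellOf (D : Set (ℤ × ℤ)) (a b : ℤ) : Set ℤ :=
  {v | ∀ q ∈ D, (Encloses q a b → q.1 ≤ v ∧ v ≤ q.2) ∧ (¬ Encloses q a b → v ≤ q.1 ∨ q.2 ≤ v)}

theorem cellBoundaryPair_of_mem {D : Set (ℤ × ℤ)} {a b : ℤ} {S : Finset ℤ}
    (hS : ∀ v ∈ S, v ∈ cellOf D a b) {x y : ℤ} (hx : x ∈ S) (hy : y ∈ S) (hxy : x < y)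
    (hxyD : (x, y) ∈ D) : CellBoundaryPair S x y := by
  refine ⟨hx, hy, hxy, ?_⟩
  by_cases hxye : Encloses (x, y) a b
  · exact Or.inr fun c hc => (hS c hc (x, y) hxyD).1 hxye
  · exact Or.inl fun c hc hin => by have := (hS c hc (x, y) hxyD).2 hxye; omega

structure NoncrossingArc (D : Set (ℤ × ℤ)) (a b : ℤ) : Prop where
  isArc : IsArc a b
  not_mem : (a, b) ∉ D
  isArc_of_mem : ∀ q ∈ D, IsArc q.1 q.2
  not_cross : ∀ q ∈ D, ∀ r ∈ D, ¬ Cross q r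
  not_cross_self : ∀ q ∈ D, ¬ Cross q (a, b)

theorem noncrossingArc_of_mem {U D : Set (ℤ × ℤ)} (hU : ∀ p ∈ U, IsArc p.1 p.2)
    (hD : D ⊆ core U) {a b : ℤ} (hab : (a, b) ∈ U) (habD : (a, b) ∉ D) :
    NoncrossingArc D a b where
  isArc := hU _ hab
  not_mem := habD
  isArc_of_mem _ hq := hU _ (hD hq).1
  not_cross _ hq r hr := (hD hq).2 r (hD hr).1
  not_cross_self _ hq := (hD hq).2 (a, b) hab

namespace NoncrossingArc

variable {D : Set (ℤ × ℤ)} {a b : ℤ}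

theorem left_mem_cellOf (h : NoncrossingArc D a b) : a ∈ cellOf D a b := by
  intro q hq
  have := h.not_cross_self q hq
  have := h.isArc
  simp only [Encloses, Cross, IsArc] at *
  omega

theorem right_mem_cellOf (h : NoncrossingArc D a b) : b ∈ cellOf D a b := by
  intro q hq
  have := h.not_cross_self q hq
  have := h.isArc
  simp only [Encloses, Cross, IsArc] at *
  omega

theorem mem_cellOf_of_max_arc (h : NoncrossingArc D a b) {u w : ℤ} (hu : u ∈ cellOf D a b)
    (huw : u < w) (hw : w = u + 1 ∨ (u, w) ∈ D)
    (henc : ∀ q ∈ D, Encloses q a b → q.1 ≤ w ∧ w ≤ q.2)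
    (hmax : ∀ e, (u, e) ∈ D → ¬ Encloses (u, e) a b → e ≤ w) : w ∈ cellOf D a b := by
  intro q hq
  refine ⟨henc q hq, fun hnq => ?_⟩
  by_contra! hin
  have hle : u ≤ q.1 := by have := (hu q hq).2 hnq; omega
  rcases hle.eq_or_lt with rfl | hlt
  · exact absurd (hmax q.2 hq hnq) (by omega)
  · have huwD : (u, w) ∈ D := hw.resolve_left (by omega)
    exact h.not_cross _ huwD q hq (Or.inl ⟨hlt, hin.1, hin.2⟩)

theorem mem_cellOf_of_min_arc (h : NoncrossingArc D a b) {u w : ℤ} (hu : u ∈ cellOf D a b)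
    (hwu : w < u) (hw : u = w + 1 ∨ (w, u) ∈ D)
    (henc : ∀ q ∈ D, Encloses q a b → q.1 ≤ w ∧ w ≤ q.2)
    (hmin : ∀ e, (e, u) ∈ D → ¬ Encloses (e, u) a b → w ≤ e) : w ∈ cellOf D a b := by
  intro q hq
  refine ⟨henc q hq, fun hnq => ?_⟩
  by_contra! hin
  have hle : q.2 ≤ u := by have := (hu q hq).2 hnq; omega
  rcases hle.eq_or_lt with hq2 | hlt
  · have hq' : (q.1, u) ∈ D := hq2 ▸ hq
    exact absurd (hmin q.1 hq' (hq2 ▸ hnq)) (by omega)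
  · have hwuD : (w, u) ∈ D := hw.resolve_left (by omega)
    exact h.not_cross q hq _ hwuD (Or.inl ⟨hin.1, hin.2, hlt⟩)

theorem exists_mem_cellOf_between (h : NoncrossingArc D a b) {u v : ℤ}
    (hu : u ∈ cellOf D a b) (hv : v ∈ cellOf D a b) (huv : u + 2 ≤ v) (hne : (u, v) ∉ D) :
    ∃ w ∈ cellOf D a b, u < w ∧ w < v := by
  obtain ⟨w, hw, hwmax⟩ := Int.exists_greatest_of_bdd
    (P := fun e => e = u + 1 ∨ ((u, e) ∈ D ∧ e < v))
    ⟨v, fun e he => by rcases he with rfl | he <;> omega⟩ ⟨u + 1, Or.inl rfl⟩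
  have huw : u < w ∧ w < v := by
    rcases hw with rfl | ⟨hD, hlt⟩
    · omega
    · exact ⟨by have := h.isArc_of_mem _ hD; simp only [IsArc] at this; omega, hlt⟩
  refine ⟨w, h.mem_cellOf_of_max_arc hu huw.1 (hw.imp id And.left) ?_ ?_, huw⟩
  · intro q hq hqe
    have := (hu q hq).1 hqe
    have := (hv q hq).1 hqe
    omega
  · intro e he hne'
    have := (hv _ he).2 hne'
    refine hwmax e (Or.inr ⟨he, lt_of_le_of_ne (by omega) ?_⟩)
    rintro rfl
    exact hne he

theorem exists_minimal_encloses (h : NoncrossingArc D a b) (hex : ∃ q ∈ D, Encloses q a b) :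
    ∃ q ∈ D, Encloses q a b ∧ ∀ r ∈ D, Encloses r a b → r.1 ≤ q.1 ∧ q.2 ≤ r.2 := by
  obtain ⟨-, ⟨q, hq, hqe, rfl⟩, hmin⟩ := Int.exists_least_of_bdd
    (P := fun n => ∃ q ∈ D, Encloses q a b ∧ q.2 - q.1 = n)
    ⟨0, by rintro _ ⟨q, -, hqe, rfl⟩; have := h.isArc; simp only [Encloses, IsArc] at *; omega⟩
    (hex.elim fun q hq => ⟨_, q, hq.1, hq.2, rfl⟩)
  -- enclosing arcs of `D` are pairwise nested, so one of least width is the innermost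
  refine ⟨q, hq, hqe, fun r hr hre => ?_⟩
  have := hmin _ ⟨r, hr, hre, rfl⟩
  have := h.not_cross q hq r hr
  have := h.isArc
  simp only [Encloses, Cross, IsArc] at *
  omega

theorem exists_isFiniteCell (h : NoncrossingArc D a b) (hex : ∃ q ∈ D, Encloses q a b) :
    ∃ S : Finset ℤ, IsFiniteCell D S ∧ FiniteInterior S a b := by
  obtain ⟨q, hq, hqe, hmin⟩ := h.exists_minimal_encloses hex
  have hsub : cellOf D a b ⊆ Set.Icc q.1 q.2 := fun v hv => (hv q hq).1 hqe
  have hends : q.1 ∈ cellOf D a b ∧ q.2 ∈ cellOf D a b := by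
    constructor <;> intro r hr <;> have := hmin r hr <;> have := h.not_cross q hq r hr
      <;> have := h.isArc <;> simp only [Encloses, Cross, IsArc] at * <;> omega
  set S := ((Set.finite_Icc q.1 q.2).subset hsub).toFinset
  have hS : ∀ v, v ∈ S ↔ v ∈ cellOf D a b := fun v => Set.Finite.mem_toFinset _
  have hq_ne : q ≠ (a, b) := fun he => h.not_mem (he ▸ hq)
  refine ⟨S, ⟨⟨a, (hS a).2 h.left_mem_cellOf⟩, ?_, ?_⟩, (hS a).2 h.left_mem_cellOf,
    (hS b).2 h.right_mem_cellOf, by have := h.isArc; simp only [IsArc] at this; omega, ?_⟩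
  · rintro x y ⟨hx, hy, hxy, hbd⟩
    by_contra! hxyD
    obtain ⟨w, hw, hxw, hwy⟩ := h.exists_mem_cellOf_between ((hS x).1 hx) ((hS y).1 hy)
      (by simp only [IsEdge] at hxyD; omega) hxyD.2
    rcases hbd with hbd | hbd
    · exact hbd w ((hS w).2 hw) ⟨hxw, hwy⟩
    · have := hbd _ ((hS _).2 hends.1)
      have := hbd _ ((hS _).2 hends.2)
      have := hsub ((hS x).1 hx)
      have := hsub ((hS y).1 hy)
      exact hxyD.2 (show (x, y) = q by ext <;> simp only [Set.mem_Icc] at * <;> omega ▸ hq)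
  · exact fun x hx y hy hxy hbd hxyD =>
      hbd (cellBoundaryPair_of_mem (fun v hv => (hS v).1 hv) hx hy hxy hxyD)
  · rintro ⟨-, -, -, hbd | hbd⟩
    · obtain ⟨w, hw, haw, hwb⟩ := h.exists_mem_cellOf_between h.left_mem_cellOf
        h.right_mem_cellOf h.isArc h.not_mem
      exact hbd w ((hS w).2 hw) ⟨haw, hwb⟩
    · have := hbd _ ((hS _).2 hends.1)
      have := hbd _ ((hS _).2 hends.2)
      exact hq_ne (by ext <;> simp only [Encloses] at hqe <;> omega)

theorem exists_encloses_of_hasFountain (h : NoncrossingArc D a b) (hf : HasFountain D) :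
    ∃ q ∈ D, Encloses q a b := by
  obtain ⟨n, hl, hr⟩ := hf
  have hl' : ¬ BddBelow {m | (m, n) ∈ D} := fun hbb => hl (hbb.finite_of_bddAbove
    ⟨n, fun m hm => by have := h.isArc_of_mem _ hm; simp only [IsArc] at this; omega⟩)
  have hr' : ¬ BddAbove {p | (n, p) ∈ D} := fun hba => hr (BddBelow.finite_of_bddAbove
    ⟨n, fun p hp => by have := h.isArc_of_mem _ hp; simp only [IsArc] at this; omega⟩ hba)
  obtain ⟨p, hp, hbp⟩ := not_bddAbove_iff.1 hr' b
  rcases le_or_gt n a with hna | hna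
  · exact ⟨(n, p), hp, hna, hbp.le⟩
  rcases le_or_gt b n with hbn | hbn
  · obtain ⟨m, hm, hma⟩ := not_bddBelow_iff.1 hl' a
    exact ⟨(m, n), hm, hma.le, hbn⟩
  · exact absurd (Or.inr ⟨hna, hbn, hbp⟩) (h.not_cross_self _ hp)

theorem exists_mem_cellOf_gt (h : NoncrossingArc D a b) (hnenc : ∀ q ∈ D, ¬ Encloses q a b)
    {u : ℤ} (hfin : {e | (u, e) ∈ D}.Finite) (hu : u ∈ cellOf D a b) :
    ∃ w ∈ cellOf D a b, u < w := by
  obtain ⟨M, hM⟩ := hfin.bddAbove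
  obtain ⟨w, hw, hwmax⟩ := Int.exists_greatest_of_bdd (P := fun e => e = u + 1 ∨ (u, e) ∈ D)
    ⟨max M (u + 1), fun e he => he.elim (fun he => he ▸ le_max_right _ _)
      fun he => (hM he).trans (le_max_left _ _)⟩ ⟨u + 1, Or.inl rfl⟩
  have huw : u < w := (hwmax _ (Or.inl rfl)).trans_lt' (lt_add_one u)
  exact ⟨w, h.mem_cellOf_of_max_arc hu huw hw (fun q hq hqe => absurd hqe (hnenc q hq))
    fun e he _ => hwmax e (Or.inr he), huw⟩

theorem exists_mem_cellOf_lt (h : NoncrossingArc D a b) (hnenc : ∀ q ∈ D, ¬ Encloses q a b)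
    {u : ℤ} (hfin : {e | (e, u) ∈ D}.Finite) (hu : u ∈ cellOf D a b) :
    ∃ w ∈ cellOf D a b, w < u := by
  obtain ⟨m, hm⟩ := hfin.bddBelow
  obtain ⟨w, hw, hwmin⟩ := Int.exists_least_of_bdd (P := fun e => u = e + 1 ∨ (e, u) ∈ D)
    ⟨min m (u - 1), fun e he => he.elim (fun he => by omega)
      fun he => (min_le_left _ _).trans (hm he)⟩ ⟨u - 1, Or.inl (by omega)⟩
  have hwu : w < u := (hwmin _ (Or.inl (by omega))).trans_lt (sub_one_lt u)
  exact ⟨w, h.mem_cellOf_of_min_arc hu hwu hw (fun q hq hqe => absurd hqe (hnenc q hq))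
    fun e he _ => hwmin e (Or.inr he), hwu⟩

theorem exists_isInfiniteCell (h : NoncrossingArc D a b) (hnenc : ∀ q ∈ D, ¬ Encloses q a b)
    (hD : LocallyFinite D) : ∃ f : ℤ → ℤ, IsInfiniteCell D f ∧ InfiniteInterior f a b := by
  obtain ⟨f, hf, hrange⟩ := exists_strictMono_range_eq_of_unbounded ⟨a, h.left_mem_cellOf⟩
    (fun u => h.exists_mem_cellOf_gt hnenc ((hD u).subset fun _ => Or.inr))
    (fun u => h.exists_mem_cellOf_lt hnenc ((hD u).subset fun _ => Or.inl))
  have hmem : ∀ t, f t ∈ cellOf D a b := fun t => hrange ▸ ⟨t, rfl⟩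
  have hgap : ∀ t, ∀ v ∈ cellOf D a b, ¬ (f t < v ∧ v < f (t + 1)) := by
    rintro t v hv ⟨h1, h2⟩
    obtain ⟨k, rfl⟩ := hrange ▸ hv
    have := hf.lt_iff_lt.1 h1
    have := hf.lt_iff_lt.1 h2
    omega
  have hstep : ∀ t, IsEdge (f t) (f (t + 1)) ∨ (f t, f (t + 1)) ∈ D := by
    intro t
    by_contra! hne
    have := hf (lt_add_one t)
    obtain ⟨w, hw, hlt⟩ := h.exists_mem_cellOf_between (hmem t) (hmem (t + 1))
      (by simp only [IsEdge] at hne; omega) hne.2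
    exact hgap t w hw hlt
  refine ⟨f, ⟨hf, hstep, fun k l hkl hkD => ?_⟩, ?_⟩
  · have := (hmem (k + 1) _ hkD).2 (hnenc _ hkD)
    have := hf (lt_add_one k)
    have := hf (show k + 1 < l by omega)
    omega
  · obtain ⟨k, hk⟩ := hrange ▸ h.left_mem_cellOf
    obtain ⟨l, hl⟩ := hrange ▸ h.right_mem_cellOf
    have hab := h.isArc
    have hkl : k < l := hf.lt_iff_lt.1 (by simp only [IsArc] at hab; omega)
    refine ⟨k, l, ?_, hk.symm, hl.symm⟩
    by_contra! hlk
    obtain rfl : l = k + 1 := by omega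
    obtain ⟨w, hw, hlt⟩ := h.exists_mem_cellOf_between h.left_mem_cellOf
        h.right_mem_cellOf hab h.not_mem
    exact hgap k w hw (by rw [hk, hl]; exact hlt)

end NoncrossingArc

/-- if `U` is a Ptolemy diagram of the ∞-gon and `D ⊆ I(U)` is locally
finite or has a fountain, then every arc of `U` not in `D` lies in the interior of some
finite or infinite `D`-cell. -/
theorem stmt18 (U D : Set (ℤ × ℤ)) (hU : IsPtolemy U) (hD : D ⊆ core U)
    (hDf : LocallyFinite D ∨ HasFountain D) :
    ∀ p ∈ U, p ∉ D →
      (∃ S : Finset ℤ, IsFiniteCell D S ∧ FiniteInterior S p.1 p.2) ∨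
      (∃ f : ℤ → ℤ, IsInfiniteCell D f ∧ InfiniteInterior f p.1 p.2) := by
  rintro ⟨a, b⟩ hab habD
  have h : NoncrossingArc D a b := noncrossingArc_of_mem hU.1 hD hab habD
  by_cases hex : ∃ q ∈ D, Encloses q a b
  · exact Or.inl (h.exists_isFiniteCell hex)
  · have hnenc : ∀ q ∈ D, ¬ Encloses q a b := fun q hq hqe => hex ⟨q, hq, hqe⟩
    have hLF : LocallyFinite D :=
      hDf.resolve_right fun hf => hex (h.exists_encloses_of_hasFountain hf)
    exact Or.inr (h.exists_isInfiniteCell hnenc hLF)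

end InfinityGonPtolemy
end
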